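/- arXiv:2405.16225 — 8 statements merged into one kernel-verified Lean document; each statement's English description precedes it below -/
import Mathlib

section
/- Let M be a maximal ancestral graph on a finite vertex set O, let T ∈ O, and let X ∈ MMB(T). Then there exists a set Z ⊆ O \ {T, X} that m-separates T and X if and only if there exists a set Z ⊆ MMB(T) \ {X} that m-separates T and X. -/
/-- A mixed graph on a vertex type `V`: each pair of distinct vertices carries at most
one edge, which is either directed (`dir a b` meaning `a → b`) or bidirected
(`bi a b` meaning `a ↔ b`). -/
structure MixedGraph (V : Type*) where
  /-- directed edge `a → b` -/
  dir : V → V → Prop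
  /-- bidirected edge `a ↔ b` -/
  bi : V → V → Prop
  bi_symm : ∀ a b, bi a b → bi b a
  dir_irrefl : ∀ a, ¬ dir a a
  bi_irrefl : ∀ a, ¬ bi a a
  not_dir_and_bi : ∀ a b, dir a b → ¬ bi a b
  not_dir_both : ∀ a b, dir a b → ¬ dir b a

namespace MixedGraph

variable {V : Type*} (G : MixedGraph V)

/-- `a` and `b` are adjacent: some edge joins them. -/
def Adj (a b : V) : Prop := G.dir a b ∨ G.dir b a ∨ G.bi a b

/-- There is an edge between `a` and `b` with an arrowhead at `b`
(i.e. `a → b` or `a ↔ b`). -/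
def HeadAt (a b : V) : Prop := G.dir a b ∨ G.bi a b

/-- `a` is an ancestor of `b` (equivalently `b` is a descendant of `a`):
`a = b` or there is a directed path from `a` to `b`. -/
def Anc : V → V → Prop := Relation.ReflTransGen G.dir

/-- A non-endpoint vertex `b` lying between `a` and `c` on a path is a collider if
both incident edges have an arrowhead at `b`. -/
def ColliderAt (a b c : V) : Prop := G.HeadAt a b ∧ G.HeadAt c b

/-- `p` is a path (a list of pairwise distinct, consecutively adjacent vertices)
from `x` to `y`. -/
def IsPath (p : List V) (x y : V) : Prop :=
  p.Nodup ∧ p.head? = some x ∧ p.getLast? = some y ∧ p.Chain' G.Adj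

/-- The path `p` from `x` to `y` is m-connecting relative to `Z`: every
non-collider on `p` is not in `Z` and every collider on `p` has a descendant in `Z`. -/
def MConnecting (Z : Set V) (p : List V) (x y : V) : Prop :=
  G.IsPath p x y ∧
    ∀ a b c : V, [a, b, c] <:+: p →
      (G.ColliderAt a b c → ∃ z ∈ Z, G.Anc b z) ∧
      (¬ G.ColliderAt a b c → b ∉ Z)

/-- `Z` m-separates `x` and `y` (with `x, y ∉ Z`): no path between `x` and `y` is
m-connecting relative to `Z`. -/
def MSep (x y : V) (Z : Set V) : Prop :=
  x ∉ Z ∧ y ∉ Z ∧ ∀ p : List V, ¬ G.MConnecting Z p x y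

/-- An inducing path between `x` and `y`: every non-endpoint vertex is a collider on
the path and is an ancestor of `x` or of `y`. -/
def IsInducingPath (p : List V) (x y : V) : Prop :=
  G.IsPath p x y ∧
    ∀ a b c : V, [a, b, c] <:+: p → G.ColliderAt a b c ∧ (G.Anc b x ∨ G.Anc b y)

/-- A collider path between `x` and `y`: a path with at least one non-endpoint
vertex, all of whose non-endpoint vertices are colliders. -/
def IsColliderPath (p : List V) (x y : V) : Prop :=
  G.IsPath p x y ∧ 3 ≤ p.length ∧ ∀ a b c : V, [a, b, c] <:+: p → G.ColliderAt a b c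

/-- `G` is ancestral: no directed cycle and no almost directed cycle. -/
def Ancestral : Prop :=
  (∀ a b, G.dir a b → ¬ G.Anc b a) ∧ (∀ a b, G.bi a b → ¬ G.Anc a b)

/-- `G` is a maximal ancestral graph: ancestral, and any two non-adjacent vertices
have no inducing path between them. -/
def IsMAG : Prop :=
  G.Ancestral ∧ ∀ x y : V, x ≠ y → ¬ G.Adj x y → ∀ p : List V, ¬ G.IsInducingPath p x y

/-- The MAG Markov blanket of `T`: all `X ≠ T` such that `T` and `X` are not
m-separated by `O \ {T, X}`. -/
def MMB (T : V) : Set V :=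
  {X | X ≠ T ∧ ¬ G.MSep T X (Set.univ \ {T, X})}

/-- `MMB⁺(T) = MMB(T) ∪ {T}`. -/
def MMBplus (T : V) : Set V := G.MMB T ∪ {T}

/-- The induced subgraph of `G` on a set `s` of vertices, keeping all edges of `G`
between vertices of `s`. -/
def induce (s : Set V) : MixedGraph s where
  dir a b := G.dir a b
  bi a b := G.bi a b
  bi_symm a b h := G.bi_symm a b h
  dir_irrefl a := G.dir_irrefl a
  bi_irrefl a := G.bi_irrefl a
  not_dir_and_bi a b h := G.not_dir_and_bi a b h
  not_dir_both a b h := G.not_dir_both a b h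

end MixedGraph

open List

namespace MixedGraph
variable {V : Type*} {G : MixedGraph V} {a b c x y : V}

lemma Adj.symm' (h : G.Adj a b) : G.Adj b a := by
  rcases h with h|h|h
  · exact Or.inr (Or.inl h)
  · exact Or.inl h
  · exact Or.inr (Or.inr (G.bi_symm _ _ h))

lemma adj_irrefl (G : MixedGraph V) (a : V) : ¬ G.Adj a a := by
  rintro (h|h|h)
  · exact G.dir_irrefl a h
  · exact G.dir_irrefl a h
  · exact G.bi_irrefl a h

lemma dir_of_adj_not_headAt (hadj : G.Adj a b) (h : ¬ G.HeadAt a b) : G.dir b a := by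
  rcases hadj with h'|h'|h'
  · exact absurd (Or.inl h') h
  · exact h'
  · exact absurd (Or.inr h') h

lemma not_headAt_of_dir (h : G.dir a b) : ¬ G.HeadAt b a := by
  rintro (h'|h')
  · exact G.not_dir_both a b h h'
  · exact G.not_dir_and_bi a b h (G.bi_symm _ _ h')

lemma Anc.refl' : G.Anc a a := Relation.ReflTransGen.refl
lemma Anc.trans' (h : G.Anc a b) (h' : G.Anc b c) : G.Anc a c := Relation.ReflTransGen.trans h h'
lemma anc_of_dir (h : G.dir a b) : G.Anc a b := Relation.ReflTransGen.single h

lemma colliderAt_symm (h : G.ColliderAt a b c) : G.ColliderAt c b a := ⟨h.2, h.1⟩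

/-- extract a directed chain witnessing ancestry -/
lemma exists_dirChain (h : G.Anc x y) :
    ∃ d : List V, d.Chain' G.dir ∧ d.head? = some x ∧ d.getLast? = some y ∧
      ∀ u ∈ d, G.Anc x u := by
  induction h using Relation.ReflTransGen.head_induction_on with
  | refl =>
    refine ⟨[y], List.isChain_singleton y, rfl, by simp, ?_⟩
    intro u hu; simp at hu; subst hu; exact Anc.refl'
  | head hab _ ih =>
    obtain ⟨d, hc, hh, hl, hm⟩ := ih
    have hdne : d ≠ [] := by intro h; simp [h] at hh
    refine ⟨_ :: d, ?_, rfl, ?_, ?_⟩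
    · exact hc.cons (fun z hz => by rw [hh] at hz; simp at hz; subst hz; exact hab)
    · rw [show (_ :: d) = [_] ++ d from rfl, getLast?_append, hl]; rfl
    · intro u hu
      rcases mem_cons.1 hu with rfl | hu
      · exact Anc.refl'
      · exact Relation.ReflTransGen.head hab (hm u hu)

lemma triple_infix_of_eq {p s t : List V} (h : p = s ++ a :: b :: c :: t) :
    [a,b,c] <:+: p := ⟨s, t, by simp [h]⟩

lemma exists_dup_decomp : ∀ {p : List V}, ¬ p.Nodup →
    ∃ (v : V) (s m t : List V), p = s ++ v :: (m ++ v :: t) := by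
  intro p
  induction p with
  | nil => simp
  | cons x xs ih =>
    intro hp
    by_cases hx : x ∈ xs
    · obtain ⟨m, t, rfl⟩ := List.append_of_mem hx
      exact ⟨x, [], m, t, rfl⟩
    · have : ¬ xs.Nodup := fun h => hp (List.nodup_cons.2 ⟨hx, h⟩)
      obtain ⟨v, s, m, t, h⟩ := ih this
      exact ⟨v, x :: s, m, t, by simp [h]⟩

lemma triple_append_cases : ∀ {l₁ : List V} {l₂ : List V} {a b c : V}, [a,b,c] <:+: l₁ ++ l₂ →
    [a,b,c] <:+: l₁ ∨ [a,b,c] <:+: l₂ ∨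
    ([a,b] <:+ l₁ ∧ [c] <+: l₂) ∨ ([a] <:+ l₁ ∧ [b,c] <+: l₂) := by
  intro l₁
  induction l₁ with
  | nil => intro l₂ a b c h; exact Or.inr (Or.inl (by simpa using h))
  | cons x l₁ ih =>
    intro l₂ a b c h
    rw [cons_append, infix_cons_iff] at h
    rcases h with h | h
    · obtain ⟨r, hr⟩ := h
      simp only [cons_append, nil_append, cons.injEq] at hr
      obtain ⟨rfl, hr⟩ := hr
      match l₁, hr with
      | [], hr =>
        exact Or.inr (Or.inr (Or.inr ⟨suffix_refl [a], ⟨r, by simpa using hr⟩⟩))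
      | [u], hr =>
        simp only [cons_append, nil_append, cons.injEq] at hr
        obtain ⟨rfl, hr⟩ := hr
        exact Or.inr (Or.inr (Or.inl ⟨suffix_refl [a,b], ⟨r, by simpa using hr⟩⟩))
      | u :: w :: l₁, hr =>
        simp only [cons_append, cons.injEq] at hr
        obtain ⟨rfl, rfl, _⟩ := hr
        exact Or.inl ⟨[], l₁, by simp⟩
    · rcases ih h with h | h | ⟨h1, h2⟩ | ⟨h1, h2⟩
      · exact Or.inl (infix_cons h)
      · exact Or.inr (Or.inl h)
      · exact Or.inr (Or.inr (Or.inl ⟨h1.trans (suffix_cons x l₁), h2⟩))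
      · exact Or.inr (Or.inr (Or.inr ⟨h1.trans (suffix_cons x l₁), h2⟩))

lemma getLast?_of_suffix_pair {l : List V} (h : [a,b] <:+ l) : l.getLast? = some b := by
  obtain ⟨s, rfl⟩ := h
  simp

lemma getLast?_of_suffix_one {l : List V} (h : [a] <:+ l) : l.getLast? = some a := by
  obtain ⟨s, rfl⟩ := h
  simp

lemma head?_of_prefix_one {l : List V} (h : [c] <+: l) : l.head? = some c := by
  obtain ⟨s, rfl⟩ := h
  simp

lemma head?_of_prefix_pair {l : List V} (h : [b,c] <+: l) : l.head? = some b ∧ l.tail.head? = some c := by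
  obtain ⟨s, rfl⟩ := h
  simp

end MixedGraph

namespace MixedGraph
variable {V : Type*} {G : MixedGraph V} {a b c x y : V}

lemma getLast?_eq_of_suffix {l₁ l₂ : List V} (h : l₁ <:+ l₂) (hne : l₁ ≠ []) :
    l₂.getLast? = l₁.getLast? := by
  obtain ⟨s, rfl⟩ := h
  rw [getLast?_append]
  cases h' : l₁.getLast? with
  | none => exact absurd (by simpa using h') hne
  | some a => simp

/-- walk version of m-connection (no Nodup requirement) -/
def WalkConn (G : MixedGraph V) (W : Set V) (p : List V) (x y : V) : Prop :=
  p.head? = some x ∧ p.getLast? = some y ∧ p.Chain' G.Adj ∧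
    ∀ a b c : V, [a, b, c] <:+: p →
      (G.ColliderAt a b c → ∃ z ∈ W, G.Anc b z) ∧ (¬ G.ColliderAt a b c → b ∉ W)

/-- following tails forward along a walk: reach the end by a directed path,
or hit a collider which has a descendant in `W`. -/
lemma fwd_chain (W : Set V) : ∀ (r : List V) (u v y : V),
    (u :: v :: r).Chain' G.Adj →
    (∀ a b c, [a,b,c] <:+: (u :: v :: r) → G.ColliderAt a b c → ∃ z ∈ W, G.Anc b z) →
    G.dir u v → (u :: v :: r).getLast? = some y →
    Relation.TransGen G.dir u y ∨ ∃ z ∈ W, G.Anc u z := by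
  intro r
  induction r with
  | nil =>
    intro u v y _ _ hd hy
    simp at hy; subst hy
    exact Or.inl (Relation.TransGen.single hd)
  | cons c r ih =>
    intro u v y hc hcol hd hy
    by_cases hcl : G.ColliderAt u v c
    · obtain ⟨z, hz, hanc⟩ := hcol u v c ⟨[], r, by simp⟩ hcl
      exact Or.inr ⟨z, hz, (anc_of_dir hd).trans' hanc⟩
    · have hne : ¬ G.HeadAt c v := fun h => hcl ⟨Or.inl hd, h⟩
      have htl : Chain' G.Adj (v :: c :: r) := hc.tail
      have hadj : G.Adj v c := (isChain_cons_cons.1 htl).1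
      have hdvc : G.dir v c := dir_of_adj_not_headAt hadj.symm' hne
      have := ih v c y htl
        (fun a' b' c' h' => hcol a' b' c' (h'.trans ⟨[u], [], by simp⟩))
        hdvc (by simpa using hy)
      rcases this with h | ⟨z, hz, hanc⟩
      · exact Or.inl (Relation.TransGen.head hd h)
      · exact Or.inr ⟨z, hz, (anc_of_dir hd).trans' hanc⟩

/-- shortening: an m-connecting walk yields an m-connecting path -/
lemma walk_to_path (hA : G.Ancestral) (W : Set V) (T X : V) :
    ∀ n (p : List V), p.length ≤ n → G.WalkConn W p T X →
      ∃ q : List V, q.Nodup ∧ G.WalkConn W q T X := by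
  intro n
  induction n with
  | zero =>
    intro p hlen hw
    rw [Nat.le_zero, List.length_eq_zero_iff] at hlen
    subst hlen
    exact absurd hw.1 (by simp)
  | succ n ih =>
    intro p hlen hw
    by_cases hnd : p.Nodup
    · exact ⟨p, hnd, hw⟩
    obtain ⟨v, s, m, t, rfl⟩ := exists_dup_decomp hnd
    obtain ⟨h1, h2, h3, h4⟩ := hw
    have hmne : m ≠ [] := by
      rintro rfl
      have hvv : G.Adj v v := by
        have hin : [v, v] <:+: (s ++ v :: ([] ++ v :: t)) := ⟨s, t, by simp⟩
        have := h3.infix hin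
        rwa [isChain_pair] at this
      exact adj_irrefl G v hvv
    rcases eq_or_ne s [] with rfl | hsne
    · -- p = v :: (m ++ v :: t), v = T; shorten to v :: t
      simp only [nil_append, head?_cons, Option.some.injEq] at h1
      subst h1
      have hsuf : v :: t <:+ (v :: (m ++ v :: t)) := ⟨v :: m, by simp⟩
      refine ih (v :: t) ?_ ⟨rfl, ?_, h3.suffix hsuf, ?_⟩
      · have := hsuf.sublist.length_le
        simp at this hlen ⊢
        omega
      · rw [← h2]
        exact (getLast?_eq_of_suffix (by simpa using hsuf) (by simp)).symm
      · intro a' b' c' h'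
        exact h4 a' b' c' (h'.trans hsuf.isInfix)
    rcases eq_or_ne t [] with rfl | htne
    · -- p = s ++ v :: m ++ [v], v = X; shorten to s ++ [v]
      have hpre : s ++ [v] <+: (s ++ v :: (m ++ v :: [])) := ⟨m ++ [v], by simp⟩
      have hlast : (s ++ v :: (m ++ v :: [])).getLast? = some v := by
        rw [show (s ++ v :: (m ++ [v])) = (s ++ v :: m) ++ [v] from by simp, getLast?_append]
        simp
      rw [hlast] at h2
      have hvX : v = X := by simpa using h2
      refine ih (s ++ [v]) ?_ ⟨?_, by simp [hvX], h3.prefix hpre, ?_⟩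
      · have := hpre.sublist.length_le
        simp at this hlen ⊢
        omega
      · rw [← h1, head?_append_of_ne_nil _ hsne, head?_append_of_ne_nil _ hsne]
      · intro a' b' c' h'
        exact h4 a' b' c' (h'.trans hpre.isInfix)
    · -- interior duplicate: shorten to s ++ v :: t
      obtain ⟨s', α, rfl⟩ : ∃ s' α, s = s' ++ [α] := by
        rcases List.eq_nil_or_concat s with rfl | ⟨s', α, h⟩
        · exact absurd rfl hsne
        · exact ⟨s', α, by simpa using h⟩
      obtain ⟨u, m', rfl⟩ := List.exists_cons_of_ne_nil hmne
      obtain ⟨γ, t', rfl⟩ := List.exists_cons_of_ne_nil htne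
      obtain ⟨m'', β, hm''⟩ : ∃ m'' β, u :: m' = m'' ++ [β] := by
        rcases List.eq_nil_or_concat (u :: m') with h | ⟨m'', β, h⟩
        · simp at h
        · exact ⟨m'', β, by simpa using h⟩
      -- key triples of p
      have hT1 : [α, v, u] <:+: ((s' ++ [α]) ++ v :: (u :: m' ++ v :: γ :: t')) :=
        ⟨s', m' ++ v :: γ :: t', by simp⟩
      have hT2 : [β, v, γ] <:+: ((s' ++ [α]) ++ v :: (u :: m' ++ v :: γ :: t')) := by
        refine ⟨(s' ++ [α]) ++ v :: m'', t', ?_⟩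
        rw [show u :: m' ++ v :: γ :: t' = (u :: m') ++ (v :: γ :: t') from by simp, hm'']
        simp
      have hAdjvu : G.Adj v u := by
        have hin : [v,u] <:+: ((s' ++ [α]) ++ v :: (u :: m' ++ v :: γ :: t')) :=
          ⟨s' ++ [α], m' ++ v :: γ :: t', by simp⟩
        have := h3.infix hin
        rwa [isChain_pair] at this
      -- hard case: a descendant of v in W
      have hdesc : G.HeadAt α v → ¬ G.ColliderAt α v u → ∃ z ∈ W, G.Anc v z := by
        intro hHav hncl
        have hnuv : ¬ G.HeadAt u v := fun h => hncl ⟨hHav, h⟩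
        have hdvu : G.dir v u := dir_of_adj_not_headAt hAdjvu.symm' hnuv
        have hq' : (v :: u :: (m' ++ [v])) <:+:
            ((s' ++ [α]) ++ v :: (u :: m' ++ v :: γ :: t')) :=
          ⟨s' ++ [α], γ :: t', by simp⟩
        have := fwd_chain W (m' ++ [v]) v u v (h3.infix hq')
          (fun a' b' c' h' hcl => (h4 a' b' c' (h'.trans hq')).1 hcl)
          hdvu (by rw [show v :: u :: (m' ++ [v]) = (v :: u :: m') ++ [v] from by simp,
            getLast?_append]; simp)
        rcases this with h | h
        · obtain ⟨w, hd, hrt⟩ := (Relation.TransGen.head'_iff).1 h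
          exact absurd hrt (hA.1 v w hd)
        · exact h
      -- the shortened walk
      have hqsuf : (v :: γ :: t') <:+ ((s' ++ [α]) ++ v :: (u :: m' ++ v :: γ :: t')) :=
        ⟨(s' ++ [α]) ++ v :: (u :: m'), by simp⟩
      have hqsuf2 : (γ :: t') <:+ ((s' ++ [α]) ++ v :: (u :: m' ++ v :: γ :: t')) :=
        ⟨(s' ++ [α]) ++ v :: (u :: m' ++ [v]), by simp⟩
      refine ih ((s' ++ [α]) ++ v :: γ :: t') ?_ ⟨?_, ?_, ?_, ?_⟩
      · simp at hlen ⊢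
        omega
      · have e1 : ((s' ++ [α]) ++ v :: γ :: t').head? = (s' ++ [α]).head? :=
          head?_append_of_ne_nil _ (by simp)
        have e2 : ((s' ++ [α]) ++ v :: (u :: m' ++ v :: γ :: t')).head? = (s' ++ [α]).head? :=
          head?_append_of_ne_nil _ (by simp)
        rw [e2] at h1
        rw [e1]
        exact h1
      · rw [getLast?_eq_of_suffix (l₂ := (s' ++ [α]) ++ v :: γ :: t')
            (⟨(s' ++ [α]) ++ [v], by simp⟩) (by simp : γ :: t' ≠ []),
          ← getLast?_eq_of_suffix hqsuf2 (by simp)]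
        exact h2
      · -- chain
        have hch : Chain' G.Adj ((s' ++ [α, v]) ++ (γ :: t')) := by
          refine IsChain.append
            (h3.prefix ⟨u :: m' ++ v :: γ :: t', by simp⟩)
            (h3.suffix hqsuf2) ?_
          intro x hx y hy
          simp at hx hy
          subst hx; subst hy
          have := h3.infix (show [v, γ] <:+: ((s' ++ [α]) ++ v :: (u :: m' ++ v :: γ :: t')) from
            ⟨(s' ++ [α]) ++ v :: (u :: m'), t', by simp⟩)
          rwa [isChain_pair] at this
        have heq : (s' ++ [α, v]) ++ (γ :: t') = (s' ++ [α]) ++ v :: γ :: t' := by simp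
        rwa [heq] at hch
      · -- triples
        intro a' b' c' h'
        rcases triple_append_cases h' with h' | h' | ⟨hab, hc⟩ | ⟨ha, hbc⟩
        · exact h4 a' b' c' (h'.trans ⟨[], v :: (u :: m' ++ v :: γ :: t'), by simp⟩)
        · exact h4 a' b' c' (h'.trans hqsuf.isInfix)
        · -- [a', b'] <:+ s' ++ [α], c' = v : triple [a', α, v] of p with b' = α
          obtain ⟨w, hw⟩ := hab
          have hw2 : (w ++ [a']) ++ [b'] = s' ++ [α] := by simpa using hw
          obtain ⟨hws, hbα⟩ := List.append_inj' hw2 rfl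
          have hbα' : b' = α := by simpa using hbα
          have hcv : c' = v := by
            have := head?_of_prefix_one hc
            simpa using this.symm
          refine h4 a' b' c' ⟨w, u :: m' ++ v :: γ :: t', ?_⟩
          rw [hbα', hcv, ← hws]
          simp
        · -- junction triple [α, v, γ]
          have haα : a' = α := by
            have := getLast?_of_suffix_one ha
            simpa using this.symm
          obtain ⟨hbv, hcγ⟩ := head?_of_prefix_pair hbc
          simp only [head?_cons, tail_cons, Option.some.injEq] at hbv hcγ
          rw [haα, ← hbv, ← hcγ]
          constructor
          · intro hcl
            by_cases h5 : G.ColliderAt α v u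
            · exact (h4 α v u hT1).1 h5
            · exact hdesc hcl.1 h5
          · intro hncl
            by_cases h5 : G.ColliderAt α v u
            · have hnγ : ¬ G.HeadAt γ v := fun h => hncl ⟨h5.1, h⟩
              exact (h4 β v γ hT2).2 (fun h => hnγ h.2)
            · exact (h4 α v u hT1).2 h5

lemma triple_reverse {p : List V} : [a,b,c] <:+: p.reverse ↔ [c,b,a] <:+: p := by
  rw [show [a,b,c] = List.reverse [c,b,a] from rfl, reverse_infix]

lemma chain'_adj_reverse {p : List V} (h : Chain' G.Adj p) : Chain' G.Adj p.reverse :=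
  isChain_reverse.mpr (h.imp fun _ _ hab => hab.symm')

/-- the walk-connection condition on triples -/
def Seg (G : MixedGraph V) (W : Set V) (p : List V) : Prop :=
  ∀ a b c : V, [a, b, c] <:+: p →
    (G.ColliderAt a b c → ∃ z ∈ W, G.Anc b z) ∧ (¬ G.ColliderAt a b c → b ∉ W)

lemma Seg.reverse {W : Set V} {p : List V} (h : Seg G W p) : Seg G W p.reverse := by
  intro a b c htr
  have h' := h c b a (triple_reverse.1 htr)
  exact ⟨fun hcl => h'.1 (colliderAt_symm hcl),
    fun hncl => h'.2 (fun hcl => hncl (colliderAt_symm hcl))⟩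

/-- extend a walk on the right by a directed path to `Y`, when the endpoint has no
descendant in `W`. -/
lemma extend_right {W : Set V} {p : List V} {x y Y : V}
    (hch : Chain' G.Adj p) (hh : p.head? = some x) (hl : p.getLast? = some y)
    (hanc : G.Anc y Y) (hnd : ∀ z ∈ W, ¬ G.Anc y z) (hseg : Seg G W p) :
    ∃ q : List V, Chain' G.Adj q ∧ q.head? = some x ∧ q.getLast? = some Y ∧ Seg G W q := by
  obtain ⟨d, hdc, hdh, hdl, hdm⟩ := exists_dirChain hanc
  obtain ⟨d', rfl⟩ : ∃ d', d = y :: d' := by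
    cases d with
    | nil => simp at hdh
    | cons z d' => simp at hdh; subst hdh; exact ⟨d', rfl⟩
  cases d' with
  | nil =>
    simp at hdl
    subst hdl
    exact ⟨p, hch, hh, hl, hseg⟩
  | cons u d'' =>
    have hpne : p ≠ [] := fun h => by simp [h] at hh
    have hdyu : G.dir y u := (isChain_cons_cons.1 hdc).1
    have hdsuf : (u :: d'') <:+ (y :: u :: d'') := ⟨[y], rfl⟩
    have hdlast : (u :: d'').getLast? = some Y := by
      rw [← getLast?_eq_of_suffix hdsuf (by simp)]
      exact hdl
    refine ⟨p ++ (u :: d''), ?_, ?_, ?_, ?_⟩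
    · refine IsChain.append hch ((hdc.suffix hdsuf).imp fun _ _ hab => Or.inl hab) ?_
      intro w hw z hz
      rw [hl] at hw
      simp at hw hz
      subst hw; subst hz
      exact Or.inl hdyu
    · rw [head?_append_of_ne_nil _ hpne]; exact hh
    · rw [getLast?_append]
      rw [hdlast]
      simp
    · intro a' b' c' htr
      rcases triple_append_cases htr with h' | h' | ⟨hab, hc⟩ | ⟨ha, hbc⟩
      · exact hseg a' b' c' h'
      · -- wholly within directed tail: non-collider, not in W
        have hind : [a', b', c'] <:+: (y :: u :: d'') := h'.trans hdsuf.isInfix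
        have hchd := hdc.infix hind
        have hd1 : G.dir a' b' := (isChain_cons_cons.1 hchd).1
        have hd2 : G.dir b' c' := (isChain_cons_cons.1 (isChain_cons_cons.1 hchd).2).1
        have hb : b' ∈ (y :: u :: d'') := hind.mem (by simp)
        refine ⟨fun hcl => absurd hcl.2 (not_headAt_of_dir hd2), fun _ hbW => ?_⟩
        exact hnd b' hbW (hdm b' hb)
      · -- junction [a', y, u]
        have hby : b' = y := by
          have := getLast?_of_suffix_pair hab
          rw [hl] at this
          simpa using this.symm
        have hcu : c' = u := by simpa using (head?_of_prefix_one hc).symm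
        subst hby; subst hcu
        refine ⟨fun hcl => absurd hcl.2 (not_headAt_of_dir hdyu), fun _ hbW => ?_⟩
        exact hnd b' hbW Anc.refl'
      · -- [y, u, c'] with dir y u, dir u c'
        have hay : a' = y := by
          have := getLast?_of_suffix_one ha
          rw [hl] at this
          simpa using this.symm
        obtain ⟨hbu, hcd⟩ := head?_of_prefix_pair hbc
        simp only [head?_cons, tail_cons, Option.some.injEq] at hbu
        subst hay
        obtain ⟨d₃, hd₃⟩ : ∃ d₃, d'' = c' :: d₃ := by
          cases d'' with
          | nil => simp at hcd
          | cons w d₃ => simp at hcd; subst hcd; exact ⟨d₃, rfl⟩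
        subst hbu hd₃
        have hd2 : G.dir u c' := (isChain_cons_cons.1 (isChain_cons_cons.1 hdc).2).1
        refine ⟨fun hcl => absurd hcl.2 (not_headAt_of_dir hd2), fun _ hbW => ?_⟩
        exact hnd u hbW (hdm u (by simp))

/-- the main splice construction: a "pre-inducing" walk can be converted into an
m-connecting walk relative to `W`. -/
lemma splice {W : Set V} {T X : V} (hT : T ∉ W) (hX : X ∉ W) :
    ∀ n (p : List V) (x y : V), p.length ≤ n →
    p.Chain' G.Adj → p.head? = some x → p.getLast? = some y →
    (x = T ∨ (G.Anc x T ∧ ∀ z ∈ W, ¬ G.Anc x z)) →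
    (y = X ∨ (G.Anc y X ∧ ∀ z ∈ W, ¬ G.Anc y z)) →
    (∀ a b c : V, [a,b,c] <:+: p →
      (G.ColliderAt a b c ∨ b ∉ W) ∧
      (G.ColliderAt a b c → (∃ z ∈ W, G.Anc b z) ∨ G.Anc b T ∨ G.Anc b X)) →
    ∃ q, G.WalkConn W q T X := by
  intro n
  induction n with
  | zero =>
    intro p x y hlen _ hh _ _ _ _
    rw [Nat.le_zero, List.length_eq_zero_iff] at hlen
    subst hlen
    simp at hh
  | succ n ih =>
    intro p x y hlen hch hh hl hstart hend hinv
    by_cases hgood : ∀ a b c : V, [a,b,c] <:+: p → G.ColliderAt a b c → ∃ z ∈ W, G.Anc b z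
    · -- no bad collider: extend both ends
      have hseg : Seg G W p := fun a b c htr =>
        ⟨hgood a b c htr, fun hncl _ => absurd ((hinv a b c htr).1.resolve_right
          (by intro h; exact h (by assumption))) hncl⟩
      -- extend on the right
      obtain ⟨p₁, hch₁, hh₁, hl₁, hseg₁⟩ :
          ∃ p₁ : List V, Chain' G.Adj p₁ ∧ p₁.head? = some x ∧
            p₁.getLast? = some X ∧ Seg G W p₁ := by
        rcases hend with rfl | ⟨hyX, hynd⟩
        · exact ⟨p, hch, hh, hl, hseg⟩
        · exact extend_right hch hh hl hyX hynd hseg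
      rcases hstart with rfl | ⟨hxT, hxnd⟩
      · exact ⟨p₁, hh₁, hl₁, hch₁, hseg₁⟩
      · obtain ⟨q₂, hch₂, hh₂, hl₂, hseg₂⟩ :=
          extend_right (chain'_adj_reverse hch₁) (by rw [head?_reverse]; exact hl₁)
            (by rw [getLast?_reverse]; exact hh₁) hxT hxnd hseg₁.reverse
        refine ⟨q₂.reverse, ?_, ?_, chain'_adj_reverse hch₂, hseg₂.reverse⟩
        · rw [head?_reverse]; exact hl₂
        · rw [getLast?_reverse]; exact hh₂
    · -- a bad collider exists
      push_neg at hgood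
      obtain ⟨a, b, c, htr, hcl, hnd⟩ := hgood
      have hTorX : G.Anc b T ∨ G.Anc b X :=
        ((hinv a b c htr).2 hcl).resolve_left (fun ⟨z, hz, hanc⟩ => hnd z hz hanc)
      obtain ⟨s, t, hst⟩ := htr
      rcases hTorX with hbT | hbX
      · -- drop the prefix, start from b
        have hsuf : (b :: c :: t) <:+ p := ⟨s ++ [a], by simp [← hst]⟩
        refine ih (b :: c :: t) b y ?_ (hch.suffix hsuf) rfl ?_
          (Or.inr ⟨hbT, hnd⟩) hend ?_
        · have : p.length = s.length + 3 + t.length := by rw [← hst]; simp; omega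
          simp at this ⊢
          omega
        · rw [← getLast?_eq_of_suffix hsuf (by simp)]
          exact hl
        · intro a' b' c' h'
          exact hinv a' b' c' (h'.trans hsuf.isInfix)
      · -- drop the suffix, end at b
        have hpre : (s ++ [a, b]) <+: p := ⟨c :: t, by simp [← hst]⟩
        refine ih (s ++ [a, b]) x b ?_ (hch.prefix hpre) ?_ (by simp) hstart
          (Or.inr ⟨hbX, hnd⟩) ?_
        · have : p.length = s.length + 3 + t.length := by rw [← hst]; simp; omega
          simp at this ⊢
          omega
        · have e1 : (s ++ [a, b]).head? = ((s ++ [a]) ++ [b]).head? := by simp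
          have e2 : ((s ++ [a]) ++ [b]).head? = (s ++ [a]).head? :=
            head?_append_of_ne_nil _ (by simp)
          have e3 : p.head? = (s ++ [a]).head? := by
            rw [← hst, show s ++ [a,b,c] ++ t = (s ++ [a]) ++ (b :: c :: t) from by simp]
            exact head?_append_of_ne_nil _ (by simp)
          rw [e1, e2, ← e3]
          exact hh
        · intro a' b' c' h'
          exact hinv a' b' c' (h'.trans hpre.isInfix)

lemma mem_tail_of_decomp {l s : List V} {b : V} (hs : s ≠ []) : b ∈ (s ++ b :: l).tail := by
  cases s with
  | nil => exact absurd rfl hs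
  | cons u s' => simp

lemma ne_head_of_mem_tail {q : List V} (hnd : q.Nodup) (hh : q.head? = some x)
    (hb : b ∈ q.tail) : b ≠ x := by
  cases q with
  | nil => simp at hh
  | cons u q' =>
    simp only [head?_cons, Option.some.injEq] at hh
    subst hh
    rintro rfl
    exact (nodup_cons.1 hnd).1 hb

lemma middle_ne_head {q s t : List V} (hnd : q.Nodup) (hh : q.head? = some x)
    (hq : q = s ++ a :: b :: c :: t) : b ≠ x := by
  refine ne_head_of_mem_tail hnd hh ?_
  rw [hq, show s ++ a :: b :: c :: t = (s ++ [a]) ++ b :: (c :: t) from by simp]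
  exact mem_tail_of_decomp (by simp)

lemma middle_ne_last {q s t : List V} (hnd : q.Nodup) (hl : q.getLast? = some y)
    (hq : q = s ++ a :: b :: c :: t) : b ≠ y := by
  refine ne_head_of_mem_tail (List.nodup_reverse.2 hnd) (by rw [head?_reverse]; exact hl) ?_
  rw [hq, show (s ++ a :: b :: c :: t).reverse = (c :: t).reverse ++ b :: (a :: s.reverse)
    from by simp]
  exact mem_tail_of_decomp (by simp)

/-- core of Lemma L: on a path from `T` to `X` which is m-connecting relative to a
set `S` of `D-SEP`-type, every interior vertex is a collider and an ancestor of
`T` or `X`. -/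
lemma conn_path_is_inducing {T X : V} {S : Set V}
    (hSanc : ∀ v ∈ S, G.Anc v T ∨ G.Anc v X)
    (hSmem : ∀ v, v ≠ T → v ≠ X → (G.Anc v T ∨ G.Anc v X) →
      (∃ q : List V, G.IsPath q T v ∧
        ∀ a b c : V, [a,b,c] <:+: q → G.ColliderAt a b c ∧ (G.Anc b T ∨ G.Anc b X)) → v ∈ S)
    {p : List V} (hpath : G.IsPath p T X)
    (htrip : ∀ a b c : V, [a, b, c] <:+: p →
      (G.ColliderAt a b c → ∃ z ∈ S, G.Anc b z) ∧ (¬ G.ColliderAt a b c → b ∉ S)) :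
    ∀ a b c : V, [a,b,c] <:+: p → G.ColliderAt a b c ∧ (G.Anc b T ∨ G.Anc b X) := by
  obtain ⟨hnd, hh, hl, hch⟩ := hpath
  have key : ∀ k : ℕ, ∀ (s : List V) (a b c : V) (t : List V), s.length = k →
      p = s ++ a :: b :: c :: t → G.ColliderAt a b c ∧ (G.Anc b T ∨ G.Anc b X) := by
    intro k
    induction k using Nat.strong_induction_on with
    | _ k IH =>
    intro s a b c t hk hp
    have htr : [a,b,c] <:+: p := triple_infix_of_eq hp
    have hbT : b ≠ T := middle_ne_head hnd hh hp
    have hbX : b ≠ X := middle_ne_last hnd hl hp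
    have hstepA : (G.Anc b T ∨ G.Anc b X) → b ∈ S := by
      intro hanc
      have hqpre : (s ++ [a, b]) <+: p := ⟨c :: t, by rw [hp]; simp⟩
      refine hSmem b hbT hbX hanc ⟨s ++ [a, b], ⟨hnd.sublist hqpre.sublist, ?_, by simp,
        hch.prefix hqpre⟩, ?_⟩
      · have e1 : (s ++ [a, b]).head? = ((s ++ [a]) ++ [b]).head? := by simp
        have e2 : ((s ++ [a]) ++ [b]).head? = (s ++ [a]).head? :=
          head?_append_of_ne_nil _ (by simp)
        have e3 : p.head? = (s ++ [a]).head? := by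
          rw [hp, show s ++ a :: b :: c :: t = (s ++ [a]) ++ (b :: c :: t) from by simp]
          exact head?_append_of_ne_nil _ (by simp)
        rw [e1, e2, ← e3]
        exact hh
      · intro a' b' c' h'
        obtain ⟨s₂, t₂, h₂⟩ := h'
        have hlen : s.length + 2 = s₂.length + 3 + t₂.length := by
          have := congrArg List.length h₂
          simp at this
          omega
        refine IH s₂.length (by omega) s₂ a' b' c' (t₂ ++ c :: t) rfl ?_
        rw [hp, show s ++ a :: b :: c :: t = (s ++ [a, b]) ++ (c :: t) from by simp, ← h₂]
        simp
    by_cases hcol : G.ColliderAt a b c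
    · refine ⟨hcol, ?_⟩
      obtain ⟨z, hz, hanc⟩ := (htrip a b c htr).1 hcol
      rcases hSanc z hz with h | h
      · exact Or.inl (hanc.trans' h)
      · exact Or.inr (hanc.trans' h)
    · exfalso
      have hanc : G.Anc b T ∨ G.Anc b X := by
        by_cases hhab : G.HeadAt a b
        · -- tail to the right: dir b c, follow forward
          have hnc : ¬ G.HeadAt c b := fun h => hcol ⟨hhab, h⟩
          have hadj : G.Adj b c := by
            have := hch.infix (show [b,c] <:+: p from ⟨s ++ [a], t, by rw [hp]; simp⟩)
            rwa [isChain_pair] at this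
          have hdbc : G.dir b c := dir_of_adj_not_headAt hadj.symm' hnc
          have hsuf : (b :: c :: t) <:+ p := ⟨s ++ [a], by rw [hp]; simp⟩
          have := fwd_chain S t b c X (hch.suffix hsuf)
            (fun a' b' c' h' hcl => (htrip a' b' c' (h'.trans hsuf.isInfix)).1 hcl)
            hdbc (by rw [← getLast?_eq_of_suffix hsuf (by simp)]; exact hl)
          rcases this with h | ⟨z, hz, hancz⟩
          · exact Or.inr h.to_reflTransGen
          · rcases hSanc z hz with h | h
            · exact Or.inl (hancz.trans' h)
            · exact Or.inr (hancz.trans' h)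
        · -- tail to the left: dir b a
          have hadj : G.Adj a b := by
            have := hch.infix (show [a,b] <:+: p from ⟨s, c :: t, by rw [hp]; simp⟩)
            rwa [isChain_pair] at this
          have hdba : G.dir b a := dir_of_adj_not_headAt hadj hhab
          rcases eq_or_ne s [] with rfl | hsne
          · -- a is the head, i.e. a = T
            have haT : a = T := by
              rw [hp] at hh
              simpa using hh
            exact Or.inl (haT ▸ anc_of_dir hdba)
          · obtain ⟨s', α, rfl⟩ : ∃ s' α, s = s' ++ [α] := by
              rcases List.eq_nil_or_concat s with rfl | ⟨s', α, h⟩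
              · exact absurd rfl hsne
              · exact ⟨s', α, by simpa using h⟩
            have hprev := IH s'.length (by simp at hk; omega) s' α a b (c :: t) rfl
              (by rw [hp]; simp)
            rcases hprev.2 with h | h
            · exact Or.inl ((anc_of_dir hdba).trans' h)
            · exact Or.inr ((anc_of_dir hdba).trans' h)
      exact (htrip a b c htr).2 hcol (hstepA hanc)
  intro a b c htr
  obtain ⟨s, t, hst⟩ := htr
  exact key s.length s a b c t rfl (by rw [← hst]; simp)

/-- the D-SEP–style separating set -/
def Dsep (G : MixedGraph V) (T X : V) : Set V :=
  {v | v ≠ T ∧ v ≠ X ∧ (G.Anc v T ∨ G.Anc v X) ∧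
    ∃ q : List V, G.IsPath q T v ∧
      ∀ a b c : V, [a,b,c] <:+: q → G.ColliderAt a b c ∧ (G.Anc b T ∨ G.Anc b X)}

lemma dsep_msep {T X : V} (hNoInd : ∀ p : List V, ¬ G.IsInducingPath p T X) :
    G.MSep T X (G.Dsep T X) := by
  refine ⟨fun h => h.1 rfl, fun h => h.2.1 rfl, ?_⟩
  rintro p ⟨hpath, htrip⟩
  refine hNoInd p ⟨hpath, ?_⟩
  exact conn_path_is_inducing (fun v hv => hv.2.2.1)
    (fun v h1 h2 h3 ⟨q, hq1, hq2⟩ => ⟨h1, h2, h3, q, hq1, hq2⟩) hpath htrip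

lemma dsep_sub_mmb {T X : V} : G.Dsep T X ⊆ G.MMB T \ {X} := by
  rintro v ⟨hvT, hvX, _, q, hqpath, hqtrip⟩
  refine ⟨⟨hvT, fun hms => ?_⟩, by simp [hvX]⟩
  obtain ⟨hndq, hhq, hlq, hchq⟩ := hqpath
  refine hms.2.2 q ⟨⟨hndq, hhq, hlq, hchq⟩, ?_⟩
  intro a b c htr
  refine ⟨fun _ => ⟨b, ⟨Set.mem_univ b, ?_⟩, Anc.refl'⟩,
    fun hncl => absurd (hqtrip a b c htr).1 hncl⟩
  obtain ⟨s, t, hst⟩ := htr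
  have hbT : b ≠ T := middle_ne_head (s := s) (t := t) (a := a) (c := c) hndq hhq (by rw [← hst]; simp)
  have hbv : b ≠ v := middle_ne_last (s := s) (t := t) (a := a) (c := c) hndq hlq (by rw [← hst]; simp)
  simp only [Set.mem_insert_iff, Set.mem_singleton_iff]
  push_neg
  exact ⟨hbT, hbv⟩

end MixedGraph

/-- Theorem 1, m-separation: for a MAG `M` on finite `O`, `T ∈ O` and
`X ∈ MMB(T)`, some `Z ⊆ O \ {T, X}` m-separates `T` and `X` iff some
`Z ⊆ MMB(T) \ {X}` does. -/
theorem mmb_msep_iff_msep_within_mmb {V : Type*} [Fintype V]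
    (G : MixedGraph V) (hG : G.IsMAG) (T X : V) (hX : X ∈ G.MMB T) :
    (∃ Z : Set V, Z ⊆ Set.univ \ {T, X} ∧ G.MSep T X Z) ↔
      (∃ Z : Set V, Z ⊆ G.MMB T \ {X} ∧ G.MSep T X Z) := by
  constructor
  · rintro ⟨Z₀, hsub, hT0, hX0, hall⟩
    have hNoInd : ∀ p : List V, ¬ G.IsInducingPath p T X := by
      rintro p ⟨⟨hnd, hh, hl, hch⟩, htrips⟩
      obtain ⟨w, hwconn⟩ := MixedGraph.splice (G := G) hT0 hX0 p.length p T X le_rfl hch hh hl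
        (Or.inl rfl) (Or.inl rfl)
        (fun a b c htr => ⟨Or.inl (htrips a b c htr).1, fun _ => Or.inr (htrips a b c htr).2⟩)
      obtain ⟨q, hqnd, hq1, hq2, hq3, hq4⟩ :=
        MixedGraph.walk_to_path hG.1 Z₀ T X w.length w le_rfl hwconn
      exact hall q ⟨⟨hqnd, hq1, hq2, hq3⟩, hq4⟩
    exact ⟨G.Dsep T X, MixedGraph.dsep_sub_mmb, MixedGraph.dsep_msep hNoInd⟩
  · rintro ⟨Z, hsub, hsep⟩
    refine ⟨Z, ?_, hsep⟩
    intro v hv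
    obtain ⟨hvm, hvX⟩ := hsub hv
    refine ⟨Set.mem_univ v, ?_⟩
    simp only [Set.mem_insert_iff, Set.mem_singleton_iff] at hvX ⊢
    push_neg
    exact ⟨hvm.1, hvX⟩
end

section
/- Let M be a maximal ancestral graph on a finite vertex set O, let T ∈ O, and let V_a, V_b ∈ MMB(T) be distinct. Suppose T is adjacent to V_a and T is adjacent to V_b in M, and there exists a set S ⊆ MMB(T) \ {V_a, V_b} that m-separates V_a and V_b. Then V_a and V_b are not adjacent in M, and both the edge between T and V_a and the edge between T and V_b have an arrowhead at T; that is, V_a *→ T ←* V_b is a V-structure in M. -/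
/-- if `V_a, V_b ∈ MMB(T)` are distinct, both adjacent to `T`, and some
`S ⊆ MMB(T) \ {V_a, V_b}` m-separates them, then `V_a *→ T ←* V_b` is a
V-structure in the MAG. -/
theorem vstructure_at_target_of_msep {V : Type*} [Fintype V]
    (G : MixedGraph V) (hG : G.IsMAG) (T va vb : V) (hab : va ≠ vb)
    (ha : va ∈ G.MMB T) (hb : vb ∈ G.MMB T)
    (hTa : G.Adj T va) (hTb : G.Adj T vb)
    (hsep : ∃ S : Set V, S ⊆ G.MMB T \ {va, vb} ∧ G.MSep va vb S) :
    ¬ G.Adj va vb ∧ G.HeadAt va T ∧ G.HeadAt vb T := by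
  obtain ⟨S, hSsub, hxS, hyS, hS⟩ := hsep
  have haT : va ≠ T := ha.1
  have hbT : vb ≠ T := hb.1
  have hTS : T ∉ S := fun h => (hSsub h).1.1 rfl
  have hAdjaT : G.Adj va T := by
    rcases hTa with h | h | h
    · exact Or.inr (Or.inl h)
    · exact Or.inl h
    · exact Or.inr (Or.inr (G.bi_symm _ _ h))
  have key : ∀ a b c : V, [a, b, c] <:+: [va, T, vb] → a = va ∧ b = T ∧ c = vb := by
    intro a b c h
    have := h.sublist.eq_of_length (by simp)
    simpa using this
  have hpath : G.IsPath [va, T, vb] va vb := by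
    refine ⟨by simp [haT, hab, hbT.symm], rfl, rfl, ?_⟩
    exact List.isChain_cons_cons.mpr ⟨hAdjaT, List.isChain_pair.mpr hTb⟩
  have noAdj : ¬ G.Adj va vb := by
    intro hadj
    apply hS [va, vb]
    refine ⟨⟨by simp [hab], rfl, rfl, List.isChain_pair.mpr hadj⟩, ?_⟩
    intro a b c h
    have := h.sublist.length_le
    simp at this
  have conn : ∀ (h : ¬ G.ColliderAt va T vb), False := by
    intro h
    apply hS [va, T, vb]
    refine ⟨hpath, ?_⟩
    intro a b c hinf
    obtain ⟨rfl, rfl, rfl⟩ := key a b c hinf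
    exact ⟨fun hc => absurd hc h, fun _ => hTS⟩
  have hcol : G.ColliderAt va T vb := by
    by_contra h
    exact conn h
  exact ⟨noAdj, hcol.1, hcol.2⟩
end

section
/- Let M be a maximal ancestral graph on a finite vertex set O and let A, B, C be pairwise disjoint subsets of O such that C m-separates every vertex of A from every vertex of B. Let u ∈ A and v ∈ (A ∪ C) \ {u}. Then there exists a set Z ⊆ (A ∪ B ∪ C) \ {u, v} that m-separates u and v if and only if there exists a set Z ⊆ (A ∪ C) \ {u, v} that m-separates u and v. -/
namespace MGAux

variable {V : Type*}

/-- consecutive triples of a list -/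
def trips : List V → List (V × V × V)
  | a :: b :: c :: r => (a, b, c) :: trips (b :: c :: r)
  | _ => []

@[simp] theorem trips_nil : trips ([] : List V) = [] := rfl
@[simp] theorem trips_single (a : V) : trips [a] = [] := rfl
@[simp] theorem trips_pair (a b : V) : trips [a, b] = [] := rfl
@[simp] theorem trips_cons₃ (a b c : V) (r : List V) :
    trips (a :: b :: c :: r) = (a, b, c) :: trips (b :: c :: r) := rfl

theorem mem_trips {p : List V} {a b c : V} : (a, b, c) ∈ trips p ↔ [a, b, c] <:+: p := by
  induction p with
  | nil => simp
  | cons x p ih =>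
    rw [List.infix_cons_iff]
    match p with
    | [] => simp [List.prefix_iff_eq_take]
    | [y] =>
      simp only [trips_pair, List.mem_nil_iff, false_iff]
      rintro (h | h)
      · have := h.length_le; simp at this
      · have := h.length_le; simp at this
    | y :: z :: r =>
      rw [trips_cons₃, List.mem_cons, ih]
      constructor
      · rintro (h | h)
        · simp only [Prod.mk.injEq] at h
          obtain ⟨rfl, rfl, rfl⟩ := h
          exact Or.inl ⟨r, rfl⟩
        · exact Or.inr h
      · rintro (h | h)
        · left
          rw [List.cons_prefix_cons] at h
          obtain ⟨rfl, h⟩ := h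
          rw [List.cons_prefix_cons] at h
          obtain ⟨rfl, h⟩ := h
          rw [List.cons_prefix_cons] at h
          obtain ⟨rfl, h⟩ := h
          rfl
        · exact Or.inr h

theorem trips_glue : ∀ (xs₀ : List V) (a j c : V) (ys₀ : List V),
    trips ((xs₀ ++ [a]) ++ j :: c :: ys₀) =
      trips (xs₀ ++ [a, j]) ++ (a, j, c) :: trips (j :: c :: ys₀)
  | [], a, j, c, ys₀ => by simp
  | [x], a, j, c, ys₀ => by simp
  | x :: x' :: xs₀, a, j, c, ys₀ => by
    have ih := trips_glue (x' :: xs₀) a j c ys₀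
    cases xs₀ with
    | nil => simp_all
    | cons x'' xs' =>
      simp only [List.cons_append, trips_cons₃, List.nil_append] at ih ⊢
      rw [ih]

theorem mem_trips_of_infix {p q : List V} {a b c : V} (h : (a, b, c) ∈ trips q)
    (hq : q <:+: p) : (a, b, c) ∈ trips p :=
  mem_trips.2 ((mem_trips.1 h).trans hq)

theorem fst_mem_of_mem_trips {p : List V} {a b c : V} (h : (a, b, c) ∈ trips p) : a ∈ p :=
  (mem_trips.1 h).subset (by simp)

theorem snd_mem_of_mem_trips {p : List V} {a b c : V} (h : (a, b, c) ∈ trips p) : b ∈ p :=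
  (mem_trips.1 h).subset (by simp)

theorem mem_trips_reverse {p : List V} {a b c : V} :
    (a, b, c) ∈ trips p.reverse ↔ (c, b, a) ∈ trips p := by
  rw [mem_trips, mem_trips, ← List.reverse_infix]
  constructor
  · intro h; simpa using h
  · intro h; simpa using h

theorem trips_chain' {R : V → V → Prop} : ∀ {p : List V}, p.Chain' R →
    ∀ {a b c : V}, (a, b, c) ∈ trips p → R a b ∧ R b c
  | [], _, _, _, _, h => by simp at h
  | [_], _, _, _, _, h => by simp at h
  | [_, _], _, _, _, _, h => by simp at h
  | x :: y :: z :: r, hc, a, b, c, h => by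
    rw [trips_cons₃, List.mem_cons] at h
    rcases h with h | h
    · simp only [Prod.mk.injEq] at h
      obtain ⟨rfl, rfl, rfl⟩ := h
      exact ⟨hc.rel_head, (hc.tail).rel_head⟩
    · exact trips_chain' hc.tail h

end MGAux

namespace MGAux

open MixedGraph

variable {V : Type*} (G : MixedGraph V)

/-- walk-triple conditions, trips-membership form -/
def Conds (Z : Set V) (p : List V) : Prop :=
  ∀ a b c : V, (a, b, c) ∈ trips p →
    (G.ColliderAt a b c → ∃ z ∈ Z, G.Anc b z) ∧ (¬ G.ColliderAt a b c → b ∉ Z)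

/-- m-connecting walk (no Nodup) -/
def CWalk (Z : Set V) (p : List V) (x y : V) : Prop :=
  p.head? = some x ∧ p.getLast? = some y ∧ p.Chain' G.Adj ∧ Conds G Z p

variable {G}

theorem conds_iff {Z : Set V} {p : List V} :
    Conds G Z p ↔ ∀ a b c : V, [a, b, c] <:+: p →
      (G.ColliderAt a b c → ∃ z ∈ Z, G.Anc b z) ∧ (¬ G.ColliderAt a b c → b ∉ Z) := by
  unfold Conds
  constructor
  · intro h a b c hm
    exact h a b c (mem_trips.2 hm)
  · intro h a b c hm
    exact h a b c (mem_trips.1 hm)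

theorem mconnecting_iff {Z : Set V} {p : List V} {x y : V} :
    G.MConnecting Z p x y ↔ G.IsPath p x y ∧ Conds G Z p := by
  rw [MixedGraph.MConnecting, conds_iff]

theorem Conds.infix {Z : Set V} {p q : List V} (h : Conds G Z p) (hq : q <:+: p) :
    Conds G Z q := fun a b c hm => h a b c (mem_trips_of_infix hm hq)

theorem cwalk_of_mconnecting {Z : Set V} {p : List V} {x y : V}
    (h : G.MConnecting Z p x y) : CWalk G Z p x y :=
  ⟨h.1.2.1, h.1.2.2.1, h.1.2.2.2, (mconnecting_iff.1 h).2⟩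

/-! ### graph edge basics -/

theorem adj_symm {a b : V} (h : G.Adj a b) : G.Adj b a := by
  rcases h with h | h | h
  · exact Or.inr (Or.inl h)
  · exact Or.inl h
  · exact Or.inr (Or.inr (G.bi_symm _ _ h))

theorem not_adj_self (a : V) : ¬ G.Adj a a := by
  rintro (h | h | h)
  · exact G.dir_irrefl a h
  · exact G.dir_irrefl a h
  · exact G.bi_irrefl a h

theorem not_headAt_of_dir {a b : V} (h : G.dir b a) : ¬ G.HeadAt a b := by
  rintro (h' | h')
  · exact G.not_dir_both b a h h'
  · exact G.not_dir_and_bi b a h (G.bi_symm a b h')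

theorem dir_of_adj_not_headAt {a b : V} (h : G.Adj a b) (h' : ¬ G.HeadAt a b) : G.dir b a := by
  rcases h with h | h | h
  · exact absurd (Or.inl h) h'
  · exact h
  · exact absurd (Or.inr h) h'

theorem not_collider_left {a b c : V} (h : G.dir b a) : ¬ G.ColliderAt a b c :=
  fun hc => not_headAt_of_dir h hc.1

theorem not_collider_right {a b c : V} (h : G.dir b c) : ¬ G.ColliderAt a b c :=
  fun hc => not_headAt_of_dir h hc.2

theorem collider_symm {a b c : V} (h : G.ColliderAt a b c) : G.ColliderAt c b a := ⟨h.2, h.1⟩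

theorem Conds.reverse {Z : Set V} {p : List V} (h : Conds G Z p) : Conds G Z p.reverse := by
  intro a b c hm
  rw [mem_trips_reverse] at hm
  obtain ⟨h1, h2⟩ := h c b a hm
  exact ⟨fun hc => h1 (collider_symm hc), fun hc => h2 (fun hc' => hc (collider_symm hc'))⟩

theorem CWalk.reverse {Z : Set V} {p : List V} {x y : V} (h : CWalk G Z p x y) :
    CWalk G Z p.reverse y x := by
  obtain ⟨h1, h2, h3, h4⟩ := h
  refine ⟨?_, ?_, ?_, h4.reverse⟩
  · rwa [List.head?_reverse]
  · rwa [List.getLast?_reverse]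
  · change List.IsChain _ _; rw [List.isChain_reverse]
    exact h3.imp fun a b hab => adj_symm hab

/-! ### directed-path lists -/

theorem anc_exists_list {a b : V} (h : G.Anc a b) :
    ∃ l : List V, l.head? = some a ∧ l.getLast? = some b ∧ l.Chain' G.dir := by
  induction h using Relation.ReflTransGen.head_induction_on with
  | refl => exact ⟨[b], rfl, rfl, List.isChain_singleton _⟩
  | head hd _ ih =>
    obtain ⟨l, h1, h2, h3⟩ := ih
    cases l with
    | nil => simp at h1
    | cons w l' =>
      simp only [List.head?_cons, Option.some.injEq] at h1
      subst h1
      exact ⟨_ :: w :: l', rfl, by simpa using h2, h3.cons (by simpa using hd)⟩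

theorem anc_of_chain'_dir : ∀ {l : List V} {a x : V},
    l.Chain' G.dir → l.head? = some a → x ∈ l → G.Anc a x
  | [], _, _, _, h1, _ => by simp at h1
  | w :: l', a, x, hc, h1, hx => by
    simp only [List.head?_cons, Option.some.injEq] at h1
    subst h1
    rcases List.mem_cons.1 hx with rfl | hx
    · exact Relation.ReflTransGen.refl
    · cases l' with
      | nil => simp at hx
      | cons w' l'' =>
        exact Relation.ReflTransGen.head hc.rel_head
          (anc_of_chain'_dir hc.tail rfl hx)

theorem anc_getLast_of_chain'_dir : ∀ {l : List V} {x b : V},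
    l.Chain' G.dir → l.getLast? = some b → x ∈ l → G.Anc x b
  | [], _, _, _, h1, _ => by simp at h1
  | w :: l', x, b, hc, h1, hx => by
    cases l' with
    | nil =>
      simp only [List.getLast?_singleton, Option.some.injEq] at h1
      subst h1
      simp only [List.mem_singleton] at hx
      subst hx
      exact Relation.ReflTransGen.refl
    | cons w' l'' =>
      rcases List.mem_cons.1 hx with rfl | hx
      · exact Relation.ReflTransGen.head hc.rel_head
          (anc_getLast_of_chain'_dir hc.tail (by simpa using h1) (by simp))
      · exact anc_getLast_of_chain'_dir hc.tail (by simpa using h1) hx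

end MGAux

namespace MGAux

open MixedGraph

variable {V : Type*} {G : MixedGraph V} {Z : Set V}

theorem head?_append_left {xs : List V} (ys : List V) (h : xs ≠ []) :
    (xs ++ ys).head? = xs.head? := by
  cases xs with
  | nil => exact absurd rfl h
  | cons a l => rfl

theorem getLast?_append_right (xs : List V) {ys : List V} (h : ys ≠ []) :
    (xs ++ ys).getLast? = ys.getLast? := by
  rw [List.getLast?_append]
  cases hys : ys.getLast? with
  | none => exact absurd (List.getLast?_eq_none_iff.1 hys) h
  | some b => rfl

/-- following a directed edge forward along a walk reaches `An Z` or the end -/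
theorem chain_to_end : ∀ {r : List V} {x c y : V},
    Conds G Z (x :: c :: r) → (x :: c :: r).Chain' G.Adj → G.dir x c →
    (x :: c :: r).getLast? = some y →
    (∃ z ∈ Z, G.Anc x z) ∨ G.Anc x y
  | [], x, c, y, _, _, hd, hy => by
    simp only [List.getLast?_cons_cons, List.getLast?_singleton, Option.some.injEq] at hy
    subst hy
    exact Or.inr (Relation.ReflTransGen.single hd)
  | d :: r', x, c, y, hconds, hchain, hd, hy => by
    have hm : (x, c, d) ∈ trips (x :: c :: d :: r') := by simp
    by_cases hcol : G.ColliderAt x c d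
    · obtain ⟨z, hz, hanc⟩ := (hconds x c d hm).1 hcol
      exact Or.inl ⟨z, hz, Relation.ReflTransGen.head hd hanc⟩
    · have hncd : ¬ G.HeadAt d c := fun hh => hcol ⟨Or.inl hd, hh⟩
      have hdcd : G.dir c d := dir_of_adj_not_headAt (adj_symm hchain.tail.rel_head) hncd
      have hsuf : (c :: d :: r') <:+: (x :: c :: d :: r') := ⟨[x], [], by simp⟩
      have := chain_to_end (hconds.infix hsuf) hchain.tail hdcd (by simpa using hy)
      rcases this with ⟨z, hz, hanc⟩ | hanc
      · exact Or.inl ⟨z, hz, Relation.ReflTransGen.head hd hanc⟩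
      · exact Or.inr (Relation.ReflTransGen.head hd hanc)

/-- following a directed edge forward along a walk that revisits an ancestor `t`
must hit a collider, placing `t` in `An Z` -/
theorem chain_collider (hGa : G.Ancestral) : ∀ {r : List V} {h s t : V},
    Conds G Z (h :: s :: r) → (h :: s :: r).Chain' G.Adj → G.dir h s →
    G.Anc t h → t ∈ s :: r → ∃ z ∈ Z, G.Anc t z
  | [], h, s, t, _, _, hd, hth, htm => by
    simp only [List.mem_singleton] at htm
    subst htm
    exact absurd hth (hGa.1 h t hd)
  | d :: r', h, s, t, hconds, hchain, hd, hth, htm => by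
    rcases List.mem_cons.1 htm with rfl | htm
    · exact absurd hth (hGa.1 h t hd)
    · have hm : (h, s, d) ∈ trips (h :: s :: d :: r') := by simp
      by_cases hcol : G.ColliderAt h s d
      · obtain ⟨z, hz, hanc⟩ := (hconds h s d hm).1 hcol
        exact ⟨z, hz, (hth.trans (Relation.ReflTransGen.single hd)).trans hanc⟩
      · have hncd : ¬ G.HeadAt d s := fun hh => hcol ⟨Or.inl hd, hh⟩
        have hdsd : G.dir s d := dir_of_adj_not_headAt (adj_symm hchain.tail.rel_head) hncd
        have hsuf : (s :: d :: r') <:+: (h :: s :: d :: r') := ⟨[h], [], by simp⟩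
        exact chain_collider hGa (hconds.infix hsuf) hchain.tail hdsd
          (hth.trans (Relation.ReflTransGen.single hd)) htm

theorem center_ne_head {p : List V} (hnd : p.Nodup) {a b c x : V}
    (hm : (a, b, c) ∈ trips p) (hh : p.head? = some x) : b ≠ x := by
  obtain ⟨s, t, rfl⟩ := mem_trips.1 hm
  cases s with
  | nil =>
    have hx : a = x := by simpa using hh
    subst hx
    simp only [List.nil_append, List.cons_append, List.nodup_cons] at hnd
    intro hbx
    exact hnd.1 (by simp [hbx])
  | cons s0 s' =>
    have hx : s0 = x := by simpa using hh
    subst hx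
    simp only [List.cons_append, List.nodup_cons] at hnd
    intro hbx
    subst hbx
    exact hnd.1 (by simp)

theorem center_ne_last {p : List V} (hnd : p.Nodup) {a b c y : V}
    (hm : (a, b, c) ∈ trips p) (hh : p.getLast? = some y) : b ≠ y := by
  have hm' : (c, b, a) ∈ trips p.reverse := by
    rw [mem_trips_reverse]; exact hm
  exact center_ne_head (List.nodup_reverse.2 hnd) hm' (by rwa [List.head?_reverse])

end MGAux

namespace MGAux

open MixedGraph

variable {V : Type*} {G : MixedGraph V} {Z : Set V}

theorem sublist_pair_decomp : ∀ {l : List V} {a : V}, (List.Sublist [a, a] l) →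
    ∃ m ys, l = a :: (m ++ a :: ys) ∨ ∃ x xs, l = x :: xs ∧ (List.Sublist [a, a] xs) := by
  intro l a h
  cases l with
  | nil => cases h
  | cons x l' =>
    cases h with
    | cons _ h => exact ⟨[], [], Or.inr ⟨x, l', rfl, h⟩⟩ -- keep
    | cons_cons _ h =>
      have ha : a ∈ l' := h.subset (by simp)
      obtain ⟨m, ys, rfl⟩ := List.append_of_mem ha
      exact ⟨m, ys, Or.inl rfl⟩

theorem dup_decomp : ∀ {p : List V}, ¬ p.Nodup →
    ∃ (t : V) (xs m ys : List V), p = xs ++ t :: (m ++ t :: ys) := by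
  intro p
  induction p with
  | nil => intro h; exact absurd List.nodup_nil h
  | cons x p' ih =>
    intro h
    rw [List.nodup_cons] at h
    push_neg at h
    by_cases hx : x ∈ p'
    · obtain ⟨m, ys, rfl⟩ := List.append_of_mem hx
      exact ⟨x, [], m, ys, rfl⟩
    · obtain ⟨t, xs, m, ys, rfl⟩ := ih (fun hh => (h hx hh).elim)
      exact ⟨t, x :: xs, m, ys, rfl⟩

theorem walk_to_path (hGa : G.Ancestral) :
    ∀ (n : ℕ) (p : List V), p.length ≤ n → ∀ {x y : V}, CWalk G Z p x y →
      ∃ q, G.MConnecting Z q x y := by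
  intro n
  induction n with
  | zero =>
    intro p hlen x y hw
    interval_cases hp : p.length
    · rw [List.length_eq_zero_iff] at hp
      subst hp
      simp [CWalk] at hw
  | succ n ih =>
    intro p hlen x y hw
    by_cases hnd : p.Nodup
    · exact ⟨p, mconnecting_iff.2 ⟨⟨hnd, hw.1, hw.2.1, hw.2.2.1⟩, hw.2.2.2⟩⟩
    obtain ⟨t, xs, m, ys, rfl⟩ := dup_decomp hnd
    obtain ⟨hhead, hlast, hchain, hconds⟩ := hw
    -- the shortcut walk
    have hpre : (xs ++ [t]) <:+: (xs ++ t :: (m ++ t :: ys)) := ⟨[], m ++ t :: ys, by simp⟩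
    have hsuf : (t :: ys) <:+: (xs ++ t :: (m ++ t :: ys)) := ⟨xs ++ t :: m, [], by simp⟩
    have hmidsuf : (t :: (m ++ t :: ys)) <:+: (xs ++ t :: (m ++ t :: ys)) := ⟨xs, [], by simp⟩
    have hw' : CWalk G Z (xs ++ t :: ys) x y := by
      refine ⟨?_, ?_, ?_, ?_⟩
      · cases xs with
        | nil => simpa using hhead
        | cons x0 xs' =>
          rw [head?_append_left _ (by simp)] at hhead ⊢
          exact hhead
      · rw [getLast?_append_right xs (by simp)]
        have h1 : ((t :: m) ++ (t :: ys)).getLast? = some y := by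
          have : (t :: m) ++ (t :: ys) = t :: (m ++ t :: ys) := by simp
          rw [this, ← getLast?_append_right xs (by simp)]
          exact hlast
        rwa [getLast?_append_right (t :: m) (by simp)] at h1
      · change List.IsChain _ _; rw [List.isChain_append]
        refine ⟨hchain.infix ⟨[], t :: (m ++ t :: ys), by simp⟩, hchain.infix hsuf, ?_⟩
        have := (List.isChain_append.1 hchain).2.2
        intro a ha b hb
        simp only [List.head?_cons, Option.mem_def, Option.some.injEq] at hb
        subst hb
        exact this a ha t rfl
      · -- conditions
        cases xs with
        | nil => exact hconds.infix hsuf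
        | cons xh xs' =>
        cases ys with
        | nil =>
          have : (xh :: xs') ++ [t] <:+: (xh :: xs') ++ t :: (m ++ t :: []) := hpre
          exact hconds.infix this
        | cons c ys₀ =>
          -- both sides nonempty: use trips_glue
          have hxs : (xh :: xs') ≠ [] := by simp
          have hxseq : (xh :: xs').dropLast ++ [(xh :: xs').getLast hxs] = xh :: xs' :=
            List.dropLast_append_getLast hxs
          set a := (xh :: xs').getLast hxs with ha_def
          intro a' b' c' hm'
          rw [← hxseq, trips_glue, List.mem_append, List.mem_cons] at hm'
          rcases hm' with hm' | hm' | hm'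
          · -- inside prefix xs ++ [t]
            refine hconds.infix hpre a' b' c' ?_
            have : (xh :: xs').dropLast ++ [a, t] = (xh :: xs') ++ [t] := by
              rw [← hxseq]; simp
            rwa [← this]
          · -- the junction triple (a, t, c)
            obtain ⟨ha', hb', hc'⟩ : a' = a ∧ b' = t ∧ c' = c := by
              simpa [Prod.ext_iff] using hm'
            rw [ha', hb', hc']
            -- gather facts about the two occurrences of t in the original walk
            obtain ⟨s₀, rest, hrest⟩ : ∃ s₀ rest, m ++ t :: (c :: ys₀) = s₀ :: rest := by
              cases m with
              | nil => exact ⟨t, c :: ys₀, rfl⟩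
              | cons m0 m' => exact ⟨m0, m' ++ t :: c :: ys₀, rfl⟩
            have hT1 : (a, t, s₀) ∈ trips ((xh :: xs') ++ t :: (m ++ t :: c :: ys₀)) := by
              rw [← hxseq, hrest]
              cases rest with
              | nil =>
                exfalso
                have := congrArg List.length hrest
                simp at this
                omega
              | cons r0 rest' =>
                rw [trips_glue]
                simp
            have hT2 : ∃ g, (g, t, c) ∈ trips ((xh :: xs') ++ t :: (m ++ t :: c :: ys₀)) := by
              have hXS : ((xh :: xs') ++ t :: m) ≠ [] := by simp
              have hXSeq := List.dropLast_append_getLast hXS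
              refine ⟨((xh :: xs') ++ t :: m).getLast hXS, ?_⟩
              have hshape : (xh :: xs') ++ t :: (m ++ t :: c :: ys₀)
                  = (((xh :: xs') ++ t :: m).dropLast ++ [((xh :: xs') ++ t :: m).getLast hXS])
                    ++ t :: c :: ys₀ := by
                rw [hXSeq]; simp
              rw [hshape, trips_glue]
              simp
            obtain ⟨g, hT2⟩ := hT2
            have hAdj_at : G.Adj a t := (trips_chain' hchain hT1).1
            have hAdj_ts₀ : G.Adj t s₀ := (trips_chain' hchain hT1).2
            have hAdj_tc : G.Adj t c := (trips_chain' hchain hT2).2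
            constructor
            · -- collider case : need t ∈ An(Z)
              rintro ⟨hat, hct⟩
              by_cases hs₀ : G.HeadAt s₀ t
              · exact (hconds a t s₀ hT1).1 ⟨hat, hs₀⟩
              · have hdts₀ : G.dir t s₀ := dir_of_adj_not_headAt (adj_symm hAdj_ts₀) hs₀
                have hsufm := hconds.infix hmidsuf
                have hchm := hchain.infix hmidsuf
                rw [hrest] at hsufm hchm
                exact chain_collider hGa hsufm hchm hdts₀ Relation.ReflTransGen.refl
                  (by rw [← hrest]; exact List.mem_append_right _ (by simp))
            · -- non-collider case : need t ∉ Z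
              intro hncol
              by_cases hat : G.HeadAt a t
              · have hct : ¬ G.HeadAt c t := fun hh => hncol ⟨hat, hh⟩
                have hdtc : G.dir t c := dir_of_adj_not_headAt (adj_symm hAdj_tc) hct
                exact (hconds g t c hT2).2 (not_collider_right hdtc)
              · have hdta : G.dir t a := dir_of_adj_not_headAt hAdj_at hat
                exact (hconds a t s₀ hT1).2 (not_collider_left hdta)
          · -- inside suffix t :: ys
            exact hconds.infix hsuf a' b' c' hm'
    have hlen' : (xs ++ t :: ys).length ≤ n := by
      simp only [List.length_append, List.length_cons] at hlen ⊢
      omega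
    exact ih _ hlen' hw'

end MGAux

namespace MGAux

open MixedGraph

variable {V : Type*} {G : MixedGraph V} {Z : Set V}

theorem chain'_adj_reverse {l : List V} (h : l.Chain' G.Adj) : l.reverse.Chain' G.Adj := by
  change List.IsChain _ _; rw [List.isChain_reverse]
  exact h.imp fun a b hab => adj_symm hab

theorem walk_mem_anc {p : List V} {x y : V} (hw : CWalk G Z p x y) {w : V} (hmem : w ∈ p) :
    (∃ z ∈ Z, G.Anc w z) ∨ G.Anc w x ∨ G.Anc w y := by
  obtain ⟨hhead, hlast, hchain, hconds⟩ := hw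
  obtain ⟨s, t, rfl⟩ := List.append_of_mem hmem
  cases s with
  | nil =>
    have : w = x := by simpa using hhead
    exact Or.inr (Or.inl (this ▸ Relation.ReflTransGen.refl))
  | cons s0 s' =>
  cases t with
  | nil =>
    have : w = y := by
      have := getLast?_append_right (s0 :: s') (ys := [w]) (by simp)
      rw [this] at hlast
      simpa using hlast
    exact Or.inr (Or.inr (this ▸ Relation.ReflTransGen.refl))
  | cons c t' =>
    have hs : (s0 :: s') ≠ [] := by simp
    have hseq := List.dropLast_append_getLast hs
    set a := (s0 :: s').getLast hs with ha_def
    have hT : (a, w, c) ∈ trips ((s0 :: s') ++ w :: c :: t') := by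
      rw [← hseq, trips_glue]
      simp
    by_cases hcol : G.ColliderAt a w c
    · exact Or.inl ((hconds a w c hT).1 hcol)
    · have hAdj_aw : G.Adj a w := (trips_chain' hchain hT).1
      have hAdj_wc : G.Adj w c := (trips_chain' hchain hT).2
      by_cases hcw : G.HeadAt c w
      · -- tail must be on the a-side : follow the reversed walk to the head x
        have haw : ¬ G.HeadAt a w := fun hh => hcol ⟨hh, hcw⟩
        have hdwa : G.dir w a := dir_of_adj_not_headAt hAdj_aw haw
        -- reversed prefix : (s0::s' ++ [w]).reverse = w :: a :: (dropLast).reverse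
        have hpre : ((s0 :: s') ++ [w]) <:+: ((s0 :: s') ++ w :: c :: t') :=
          ⟨[], c :: t', by simp⟩
        have hrev : ((s0 :: s') ++ [w]).reverse
            = w :: a :: ((s0 :: s').dropLast).reverse := by
          rw [← hseq]; simp
        have hcondsr : Conds G Z (w :: a :: ((s0 :: s').dropLast).reverse) := by
          rw [← hrev]; exact (hconds.infix hpre).reverse
        have hchainr : (w :: a :: ((s0 :: s').dropLast).reverse).Chain' G.Adj := by
          rw [← hrev]; exact chain'_adj_reverse (hchain.infix hpre)
        have hlastr : (w :: a :: ((s0 :: s').dropLast).reverse).getLast? = some x := by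
          rw [← hrev, List.getLast?_reverse]
          rwa [head?_append_left _ (by simp)] at hhead ⊢
        rcases chain_to_end hcondsr hchainr hdwa hlastr with h | h
        · exact Or.inl h
        · exact Or.inr (Or.inl h)
      · -- tail on the c-side : follow the walk forward to the end y
        have hdwc : G.dir w c := dir_of_adj_not_headAt (adj_symm hAdj_wc) hcw
        have hsuf : (w :: c :: t') <:+: ((s0 :: s') ++ w :: c :: t') := ⟨s0 :: s', [], by simp⟩
        have hlast' : (w :: c :: t').getLast? = some y := by
          rw [← getLast?_append_right (s0 :: s') (by simp : (w :: c :: t') ≠ [])]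
          exact hlast
        rcases chain_to_end (hconds.infix hsuf) (hchain.infix hsuf) hdwc hlast' with h | h
        · exact Or.inl h
        · exact Or.inr (Or.inr h)

end MGAux

namespace MGAux

open MixedGraph

variable {V : Type*} {G : MixedGraph V} {Z : Set V}

/-- a directed path from `b` to `e` avoiding `Z` -/
def AvoidTo (G : MixedGraph V) (Z : Set V) (b e : V) : Prop :=
  ∃ l : List V, l.head? = some b ∧ l.getLast? = some e ∧ l.Chain' G.dir ∧ ∀ x ∈ l, x ∉ Z

/-- invariant for the splicing recursion -/
def WInv (G : MixedGraph V) (Z SL SR : Set V) (w : List V) : Prop :=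
  (∃ a ∈ SL, w.head? = some a) ∧ (∃ b ∈ SR, w.getLast? = some b) ∧ w.Chain' G.Adj ∧
    ∀ a b c : V, (a, b, c) ∈ trips w →
      (¬ G.ColliderAt a b c → b ∉ Z) ∧
      (G.ColliderAt a b c → (∃ z ∈ Z, G.Anc b z) ∨ ∃ e ∈ SL ∪ SR, AvoidTo G Z b e)

open Classical in
/-- is a triple a "bad" collider (no An(Z) witness)? -/
noncomputable def isBad (G : MixedGraph V) (Z : Set V) : V × V × V → Bool :=
  fun t => decide (G.ColliderAt t.1 t.2.1 t.2.2 ∧ ¬ ∃ z ∈ Z, G.Anc t.2.1 z)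

/-- number of bad colliders -/
noncomputable def badcount (G : MixedGraph V) (Z : Set V) (w : List V) : ℕ :=
  (trips w).countP (isBad G Z)

theorem isBad_true {t : V × V × V}
    (h : G.ColliderAt t.1 t.2.1 t.2.2 ∧ ¬ ∃ z ∈ Z, G.Anc t.2.1 z) : isBad G Z t = true := by
  unfold isBad
  simp only [decide_eq_true_eq]
  exact h

theorem isBad_false {t : V × V × V}
    (h : ¬ (G.ColliderAt t.1 t.2.1 t.2.2 ∧ ¬ ∃ z ∈ Z, G.Anc t.2.1 z)) :
    isBad G Z t = false := by
  unfold isBad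
  simp only [decide_eq_false_iff_not]
  exact h

theorem of_isBad_true {t : V × V × V} (h : isBad G Z t = true) :
    G.ColliderAt t.1 t.2.1 t.2.2 ∧ ¬ ∃ z ∈ Z, G.Anc t.2.1 z := by
  unfold isBad at h
  simpa only [decide_eq_true_eq] using h

theorem dirchain_trip {l : List V} (hl : l.Chain' G.dir) (hav : ∀ x ∈ l, x ∉ Z)
    {a b c : V} (hm : (a, b, c) ∈ trips l) : ¬ G.ColliderAt a b c ∧ b ∉ Z :=
  ⟨not_collider_right (trips_chain' hl hm).2, hav b (snd_mem_of_mem_trips hm)⟩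

theorem dirchain_trip_rev {l : List V} (hl : l.Chain' G.dir) (hav : ∀ x ∈ l, x ∉ Z)
    {a b c : V} (hm : (a, b, c) ∈ trips l.reverse) : ¬ G.ColliderAt a b c ∧ b ∉ Z := by
  rw [mem_trips_reverse] at hm
  exact ⟨fun h => not_collider_right (trips_chain' hl hm).2 (collider_symm h),
    hav b (snd_mem_of_mem_trips hm)⟩

theorem badcount_dirchain {l : List V} (hl : l.Chain' G.dir) (hav : ∀ x ∈ l, x ∉ Z) :
    badcount G Z l = 0 := by
  rw [badcount, List.countP_eq_zero]
  intro t ht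
  obtain ⟨a, b, c⟩ := t
  rw [isBad_false]
  · simp
  · exact fun hh => (dirchain_trip hl hav ht).1 hh.1

theorem badcount_dirchain_rev {l : List V} (hl : l.Chain' G.dir) (hav : ∀ x ∈ l, x ∉ Z) :
    badcount G Z l.reverse = 0 := by
  rw [badcount, List.countP_eq_zero]
  intro t ht
  obtain ⟨a, b, c⟩ := t
  rw [isBad_false]
  · simp
  · exact fun hh => (dirchain_trip_rev hl hav ht).1 hh.1

theorem badcount_glue (xs₀ : List V) (a j c : V) (ys₀ : List V) :
    badcount G Z ((xs₀ ++ [a]) ++ j :: c :: ys₀)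
      = badcount G Z (xs₀ ++ [a, j]) +
        (badcount G Z (j :: c :: ys₀) + if isBad G Z (a, j, c) = true then 1 else 0) := by
  rw [badcount, trips_glue, List.countP_append, List.countP_cons, badcount, badcount]

theorem rec_engine (hGa : G.Ancestral) {SL SR : Set V}
    (hblock : ∀ a ∈ SL, ∀ b ∈ SR, ∀ q : List V, ¬ G.MConnecting Z q a b) :
    ∀ (n : ℕ) (w : List V), badcount G Z w ≤ n → WInv G Z SL SR w → False := by
  intro n
  induction n with
  | zero =>
    intro w hn hw
    obtain ⟨⟨a, ha, hhead⟩, ⟨b, hb, hlast⟩, hchain, hinv⟩ := hw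
    rw [Nat.le_zero, badcount, List.countP_eq_zero] at hn
    have hconds : Conds G Z w := by
      intro p q r hm
      refine ⟨fun hcol => ?_, (hinv p q r hm).1⟩
      by_contra hno
      exact (hn _ hm) (isBad_true ⟨hcol, hno⟩)
    obtain ⟨q, hq⟩ := walk_to_path hGa w.length w le_rfl ⟨hhead, hlast, hchain, hconds⟩
    exact hblock a ha b hb q hq
  | succ n ih =>
    intro w hn hw
    obtain ⟨⟨a₀, ha₀, hhead⟩, ⟨b₀, hb₀, hlast⟩, hchain, hinv⟩ := hw
    by_cases hbad : ∃ p q r : V, (p, q, r) ∈ trips w ∧ G.ColliderAt p q r ∧ ¬ ∃ z ∈ Z, G.Anc q z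
    swap
    · push_neg at hbad
      have hconds : Conds G Z w := fun p q r hm =>
        ⟨fun hcol => hbad p q r hm hcol, (hinv p q r hm).1⟩
      obtain ⟨q, hq⟩ := walk_to_path hGa w.length w le_rfl ⟨hhead, hlast, hchain, hconds⟩
      exact hblock a₀ ha₀ b₀ hb₀ q hq
    obtain ⟨p, j, c, hm, hcol, hnoanc⟩ := hbad
    obtain ⟨s, t', hw_eq⟩ := mem_trips.1 hm
    subst hw_eq
    have hshape : s ++ [p, j, c] ++ t' = (s ++ [p]) ++ j :: c :: t' := by simp
    rw [hshape] at hchain hinv hn hm hhead hlast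
    have hjm : (p, j, c) ∈ trips ((s ++ [p]) ++ j :: c :: t') := by
      rw [trips_glue]; simp
    have hfix : ∃ e ∈ SL ∪ SR, AvoidTo G Z j e := by
      rcases (hinv p j c hjm).2 hcol with h | h
      · exact absurd h hnoanc
      · exact h
    obtain ⟨e, he, l, hlh, hll, hlchain, hlavoid⟩ := hfix
    obtain ⟨l', rfl⟩ : ∃ l', l = j :: l' := by
      cases l with
      | nil => simp at hlh
      | cons u l' =>
        simp only [List.head?_cons, Option.some.injEq] at hlh
        subst hlh
        exact ⟨l', rfl⟩
    have hjZ : j ∉ Z := hlavoid j (by simp)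
    have hsufinfix : (j :: c :: t') <:+: ((s ++ [p]) ++ j :: c :: t') := ⟨s ++ [p], [], by simp⟩
    have hbadj : isBad G Z (p, j, c) = true := isBad_true ⟨hcol, hnoanc⟩
    have hsplit : badcount G Z ((s ++ [p]) ++ j :: c :: t')
        = badcount G Z (s ++ [p, j]) + (badcount G Z (j :: c :: t') + 1) := by
      rw [badcount_glue, hbadj, if_pos rfl]
    have hcnt_suffix : badcount G Z (j :: c :: t') ≤ n := by omega
    have hcnt_prefix : badcount G Z (s ++ [p, j]) ≤ n := by omega
    rcases he with he | he
    · -- splice towards the head : new walk (j :: l').reverse ++ (c :: t')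
      have hlastnew : ((j :: l').reverse ++ (c :: t')).getLast? = some b₀ := by
        rw [getLast?_append_right _ (by simp : (c :: t') ≠ [])]
        rw [getLast?_append_right _ (by simp : (j :: c :: t') ≠ []),
          show (j :: c :: t') = [j] ++ (c :: t') by simp,
          getLast?_append_right _ (by simp : (c :: t') ≠ [])] at hlast
        exact hlast
      have hnew : WInv G Z SL SR ((j :: l').reverse ++ (c :: t')) := by
        refine ⟨⟨e, he, ?_⟩, ⟨b₀, hb₀, hlastnew⟩, ?_, ?_⟩
        · rw [head?_append_left _ (by simp), List.head?_reverse]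
          exact hll
        · change List.IsChain _ _; rw [List.isChain_append]
          refine ⟨chain'_adj_reverse (hlchain.imp fun a b hab => Or.inl hab),
            (hchain.infix hsufinfix).tail, ?_⟩
          intro x hx yy hyy
          rw [List.getLast?_reverse] at hx
          simp only [List.head?_cons, Option.mem_def, Option.some.injEq] at hx hyy
          subst hyy
          have hxj : x = j := by
            have : j = x := by simpa using hx
            exact this.symm
          rw [hxj]
          exact (trips_chain' hchain hjm).2
        · cases l' with
          | nil =>
            intro a b c' hm'
            simp only [List.reverse_cons, List.reverse_nil, List.nil_append,
              List.singleton_append] at hm'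
            exact hinv a b c' (mem_trips_of_infix hm' hsufinfix)
          | cons x₀ l'' =>
            intro a b c' hm'
            have hrw : (j :: x₀ :: l'').reverse ++ (c :: t')
                = (l''.reverse ++ [x₀]) ++ j :: c :: t' := by simp
            rw [hrw, trips_glue, List.mem_append, List.mem_cons] at hm'
            rcases hm' with hm' | hm' | hm'
            · have hmm : (a, b, c') ∈ trips (j :: x₀ :: l'').reverse := by
                have heq : (j :: x₀ :: l'').reverse = l''.reverse ++ [x₀, j] := by simp
                rwa [heq]
              have hg := dirchain_trip_rev hlchain hlavoid hmm
              exact ⟨fun _ => hg.2, fun hc => absurd hc hg.1⟩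
            · obtain ⟨h1, h2, h3⟩ : a = x₀ ∧ b = j ∧ c' = c := by
                simpa [Prod.ext_iff] using hm'
              rw [h1, h2, h3]
              have hnc : ¬ G.ColliderAt x₀ j c := not_collider_left hlchain.rel_head
              exact ⟨fun _ => hjZ, fun hc => absurd hc hnc⟩
            · exact hinv a b c' (mem_trips_of_infix hm' hsufinfix)
      refine ih ((j :: l').reverse ++ (c :: t')) ?_ hnew
      cases l' with
      | nil =>
        have : ((j :: ([] : List V)).reverse ++ (c :: t')) = j :: c :: t' := by simp
        rw [this]
        exact hcnt_suffix
      | cons x₀ l'' =>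
        have hrw : (j :: x₀ :: l'').reverse ++ (c :: t')
            = (l''.reverse ++ [x₀]) ++ j :: c :: t' := by simp
        rw [hrw, badcount_glue]
        have h0 : badcount G Z (l''.reverse ++ [x₀, j]) = 0 := by
          have heq : l''.reverse ++ [x₀, j] = (j :: x₀ :: l'').reverse := by simp
          rw [heq]
          exact badcount_dirchain_rev hlchain hlavoid
        have hjnc : isBad G Z (x₀, j, c) = false :=
          isBad_false fun hh => (not_collider_left hlchain.rel_head) hh.1
        rw [h0, hjnc]
        simp only [Bool.false_eq_true, if_false, Nat.zero_add, Nat.add_zero]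
        exact hcnt_suffix
    · -- splice towards the tail : new walk (s ++ [p]) ++ (j :: l')
      have hpreinfix : (s ++ [p, j]) <:+: ((s ++ [p]) ++ j :: c :: t') :=
        ⟨[], c :: t', by simp⟩
      have hnew : WInv G Z SL SR ((s ++ [p]) ++ (j :: l')) := by
        refine ⟨⟨a₀, ha₀, ?_⟩, ⟨e, he, ?_⟩, ?_, ?_⟩
        · rw [head?_append_left _ (by simp)]
          rwa [head?_append_left _ (by simp)] at hhead
        · rw [getLast?_append_right _ (by simp : (j :: l') ≠ [])]
          exact hll
        · change List.IsChain _ _; rw [List.isChain_append]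
          refine ⟨hchain.infix ⟨[], j :: c :: t', by simp⟩,
            hlchain.imp fun a b hab => Or.inl hab, ?_⟩
          intro x hx yy hyy
          simp only [List.getLast?_concat, Option.mem_def, Option.some.injEq,
            List.head?_cons] at hx hyy
          subst hyy
          have hxp : x = p := by
            have : p = x := by simpa using hx
            exact this.symm
          rw [hxp]
          exact (trips_chain' hchain hjm).1
        · cases l' with
          | nil =>
            intro a b c' hm'
            have : (s ++ [p]) ++ [j] = s ++ [p, j] := by simp
            rw [this] at hm'
            exact hinv a b c' (mem_trips_of_infix hm' hpreinfix)
          | cons d l'' =>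
            intro a b c' hm'
            rw [trips_glue, List.mem_append, List.mem_cons] at hm'
            rcases hm' with hm' | hm' | hm'
            · exact hinv a b c' (mem_trips_of_infix hm' hpreinfix)
            · obtain ⟨h1, h2, h3⟩ : a = p ∧ b = j ∧ c' = d := by
                simpa [Prod.ext_iff] using hm'
              rw [h1, h2, h3]
              have hnc : ¬ G.ColliderAt p j d := not_collider_right hlchain.rel_head
              exact ⟨fun _ => hjZ, fun hc => absurd hc hnc⟩
            · have hg := dirchain_trip hlchain hlavoid hm'
              exact ⟨fun _ => hg.2, fun hc => absurd hc hg.1⟩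
      refine ih ((s ++ [p]) ++ (j :: l')) ?_ hnew
      cases l' with
      | nil =>
        have : (s ++ [p]) ++ [j] = s ++ [p, j] := by simp
        rw [this]
        exact hcnt_prefix
      | cons d l'' =>
        rw [badcount_glue]
        have h0 : badcount G Z (j :: d :: l'') = 0 := badcount_dirchain hlchain hlavoid
        have hjnc : isBad G Z (p, j, d) = false :=
          isBad_false fun hh => (not_collider_right hlchain.rel_head) hh.1
        rw [h0, hjnc]
        simp only [Bool.false_eq_true, if_false, Nat.zero_add, Nat.add_zero]
        exact hcnt_prefix

end MGAux

namespace MGAux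

open MixedGraph

variable {V : Type*} {G : MixedGraph V}

/-- the canonical separator : if `Z ⊆ W \ {u,v}` m-separates `u,v`, then so does
`(W ∩ An({u,v})) \ {u,v}` -/
theorem can (hGa : G.Ancestral) {u v : V} {Z W : Set V} (hZ : G.MSep u v Z)
    (hsub : Z ⊆ W \ {u, v}) :
    G.MSep u v ((W ∩ {x | G.Anc x u ∨ G.Anc x v}) \ {u, v}) := by
  set D : Set V := {x | G.Anc x u ∨ G.Anc x v} with hD
  refine ⟨fun h => h.2 (Set.mem_insert _ _), fun h => h.2 (Set.mem_insert_iff.2 (Or.inr rfl)), ?_⟩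
  intro p hp
  have hw : CWalk G ((W ∩ D) \ {u, v}) p u v := cwalk_of_mconnecting hp
  have hDall : ∀ x ∈ p, x ∈ D := by
    intro x hx
    rcases walk_mem_anc hw hx with ⟨z, hzS, hanc⟩ | h | h
    · rcases hzS.1.2 with h | h
      · exact Or.inl (hanc.trans h)
      · exact Or.inr (hanc.trans h)
    · exact Or.inl h
    · exact Or.inr h
  have hblock : ∀ a ∈ ({u} : Set V), ∀ b ∈ ({v} : Set V), ∀ q : List V,
      ¬ G.MConnecting Z q a b := by
    intro a ha b hb q
    rw [Set.mem_singleton_iff] at ha hb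
    subst ha; subst hb
    exact hZ.2.2 q
  refine rec_engine hGa hblock (badcount G Z p) p le_rfl ?_
  refine ⟨⟨u, rfl, hw.1⟩, ⟨v, rfl, hw.2.1⟩, hw.2.2.1, ?_⟩
  intro a b c hm
  have hbD : b ∈ D := hDall b (snd_mem_of_mem_trips hm)
  have hbu : b ≠ u := center_ne_head hp.1.1 hm hw.1
  have hbv : b ≠ v := center_ne_last hp.1.1 hm hw.2.1
  constructor
  · intro hnc hbZ
    refine (hw.2.2.2 a b c hm).2 hnc ⟨⟨(hsub hbZ).1, hbD⟩, ?_⟩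
    simp [hbu, hbv]
  · intro hcol
    obtain ⟨z, hzS, hanc⟩ := (hw.2.2.2 a b c hm).1 hcol
    have hanc' : G.Anc b u ∨ G.Anc b v := by
      rcases hzS.1.2 with h | h
      · exact Or.inl (hanc.trans h)
      · exact Or.inr (hanc.trans h)
    rcases hanc' with h | h <;>
    · obtain ⟨l, hlh, hll, hlchain⟩ := anc_exists_list h
      by_cases hZl : ∃ x ∈ l, x ∈ Z
      · obtain ⟨x, hxl, hxZ⟩ := hZl
        exact Or.inl ⟨x, hxZ, anc_of_chain'_dir hlchain hlh hxl⟩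
      · push_neg at hZl
        first
        | exact Or.inr ⟨u, by simp, l, hlh, hll, hlchain, hZl⟩
        | exact Or.inr ⟨v, by simp, l, hlh, hll, hlchain, hZl⟩

end MGAux

open MGAux in
theorem msep_subset_union_iff' {V : Type*}
    (G : MixedGraph V) (hG : G.IsMAG) (A B C : Set V)
    (hsep : ∀ a ∈ A, ∀ b ∈ B, G.MSep a b C)
    (u v : V) (hu : u ∈ A) :
    (∃ Z : Set V, Z ⊆ (A ∪ B ∪ C) \ {u, v} ∧ G.MSep u v Z) →
      (∃ Z : Set V, Z ⊆ (A ∪ C) \ {u, v} ∧ G.MSep u v Z) := by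
  rintro ⟨Z, hZsub, hZ⟩
  set D : Set V := {x | G.Anc x u ∨ G.Anc x v} with hD
  have hZstar := can hG.1 hZ hZsub
  refine ⟨((A ∪ C) ∩ D) \ {u, v}, fun x hx => ⟨hx.1.1, hx.2⟩, ?_, ?_, ?_⟩
  · exact fun h => h.2 (Set.mem_insert _ _)
  · exact fun h => h.2 (Set.mem_insert_iff.2 (Or.inr rfl))
  · intro p hp
    have hw : CWalk G (((A ∪ C) ∩ D) \ {u, v}) p u v := cwalk_of_mconnecting hp
    have hDall : ∀ x ∈ p, x ∈ D := by
      intro x hx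
      rcases walk_mem_anc hw hx with ⟨z, hzS, hanc⟩ | h | h
      · rcases hzS.1.2 with h | h
        · exact Or.inl (hanc.trans h)
        · exact Or.inr (hanc.trans h)
      · exact Or.inl h
      · exact Or.inr h
    by_cases hB : ∃ b ∈ p, b ∈ B
    · -- the path meets B : contradict `hsep` via the recursion engine
      obtain ⟨b₁, hbp, hbB⟩ := hB
      obtain ⟨p₁, p₂, rfl⟩ := List.append_of_mem hbp
      have hqinf : (p₁ ++ [b₁]) <:+: (p₁ ++ b₁ :: p₂) := ⟨[], p₂, by simp⟩
      have hblock : ∀ a ∈ A, ∀ b ∈ B, ∀ q : List V, ¬ G.MConnecting C q a b :=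
        fun a ha b hb => (hsep a ha b hb).2.2
      refine rec_engine hG.1 hblock (badcount G C (p₁ ++ [b₁])) (p₁ ++ [b₁]) le_rfl ?_
      refine ⟨⟨u, hu, ?_⟩, ⟨b₁, hbB, List.getLast?_concat⟩, hw.2.2.1.infix hqinf, ?_⟩
      · have := hw.1
        rw [show p₁ ++ b₁ :: p₂ = (p₁ ++ [b₁]) ++ p₂ by simp,
          head?_append_left _ (by simp)] at this
        exact this
      · intro a b c hm
        have hmp : (a, b, c) ∈ trips (p₁ ++ b₁ :: p₂) := mem_trips_of_infix hm hqinf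
        have hbD : b ∈ D := hDall b (snd_mem_of_mem_trips hmp)
        have hbu : b ≠ u := center_ne_head hp.1.1 hmp hw.1
        have hbv : b ≠ v := center_ne_last hp.1.1 hmp hw.2.1
        constructor
        · intro hnc hbC
          refine (hw.2.2.2 a b c hmp).2 hnc ⟨⟨Or.inr hbC, hbD⟩, ?_⟩
          simp [hbu, hbv]
        · intro hcol
          obtain ⟨z, hzS, hanc⟩ := (hw.2.2.2 a b c hmp).1 hcol
          rcases hzS.1.1 with hzA | hzC
          · obtain ⟨l, hlh, hll, hlchain⟩ := anc_exists_list hanc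
            by_cases hCl : ∃ x ∈ l, x ∈ C
            · obtain ⟨x, hxl, hxC⟩ := hCl
              exact Or.inl ⟨x, hxC, anc_of_chain'_dir hlchain hlh hxl⟩
            · push_neg at hCl
              exact Or.inr ⟨z, Or.inl hzA, l, hlh, hll, hlchain, hCl⟩
          · exact Or.inl ⟨z, hzC, hanc⟩
    · -- the path avoids B : it would connect given the canonical separator in A ∪ B ∪ C
      push_neg at hB
      refine hZstar.2.2 p (mconnecting_iff.2 ⟨hp.1, ?_⟩)
      intro a b c hm
      constructor
      · intro hcol
        obtain ⟨z, hzS, hanc⟩ := (hw.2.2.2 a b c hm).1 hcol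
        refine ⟨z, ⟨⟨?_, hzS.1.2⟩, hzS.2⟩, hanc⟩
        rcases hzS.1.1 with h | h
        · exact Or.inl (Or.inl h)
        · exact Or.inr h
      · intro hnc hbZ
        have hbp : b ∈ p := snd_mem_of_mem_trips hm
        have hbAC : b ∈ A ∪ C := by
          rcases hbZ.1.1 with h | h
          · rcases h with h | h
            · exact Or.inl h
            · exact absurd h (hB b hbp)
          · exact Or.inr h
        exact (hw.2.2.2 a b c hm).2 hnc ⟨⟨hbAC, hbZ.1.2⟩, hbZ.2⟩


/-- Lemma of Xie et al.: if `C` m-separates `A` from `B`, `u ∈ A` and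
`v ∈ (A ∪ C) \ {u}`, then `u` and `v` are m-separated by a subset of
`(A ∪ B ∪ C) \ {u, v}` iff they are m-separated by a subset of `(A ∪ C) \ {u, v}`. -/
theorem msep_subset_union_iff {V : Type*} [Fintype V]
    (G : MixedGraph V) (hG : G.IsMAG) (A B C : Set V)
    (hAB : Disjoint A B) (hAC : Disjoint A C) (hBC : Disjoint B C)
    (hsep : ∀ a ∈ A, ∀ b ∈ B, G.MSep a b C)
    (u v : V) (hu : u ∈ A) (hv : v ∈ (A ∪ C) \ {u}) :
    (∃ Z : Set V, Z ⊆ (A ∪ B ∪ C) \ {u, v} ∧ G.MSep u v Z) ↔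
      (∃ Z : Set V, Z ⊆ (A ∪ C) \ {u, v} ∧ G.MSep u v Z) := by
  constructor
  · exact msep_subset_union_iff' G hG A B C hsep u v hu
  · rintro ⟨Z, hsub, hZ⟩
    refine ⟨Z, fun x hx => ⟨?_, (hsub hx).2⟩, hZ⟩
    rcases (hsub hx).1 with h | h
    · exact Or.inl (Or.inl h)
    · exact Or.inr h
end

section
/- Suppose ℓ ∈ ι satisfies ℓ ∉ pa i for every i ∈ ι (in particular ℓ ∉ pa ℓ), and the table at ℓ is normalized: ∑_{a ∈ α ℓ} p ℓ x a = 1 for every configuration x. Then for every configuration x : Π j, α j, ∑_{a ∈ α ℓ} P (Function.update x ℓ a) = ∏_{i ≠ ℓ} p i x (x i). In particular, marginalizing the joint weight over a leaf variable ℓ yields the product of the remaining factors. -/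
/-!
No factor other than the one at `ℓ` reads the coordinate `ℓ`, so updating `x` at `ℓ` changes only
the `ℓ`-th factor of the joint weight, from `p ℓ x (x ℓ)` to `p ℓ x a`. Summing over `a` then
pulls out the product of the remaining factors, and what is left is `∑ a, p ℓ x a = 1`.
-/

open Finset

lemma DependsOn.apply_update_of_notMem {ι β : Type*} [DecidableEq ι] {α : ι → Type*}
    {f : (∀ i, α i) → β} {s : Set ι} (hf : DependsOn f s) {i : ι} (hi : i ∉ s)
    (x : ∀ j, α j) (a : α i) : f (Function.update x i a) = f x :=
  hf fun _ hj => Function.update_of_ne (ne_of_mem_of_not_mem hj hi) _ _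

lemma prod_update_eq_prod_erase_mul {ι M : Type*} [Fintype ι] [DecidableEq ι] [CommMonoid M]
    {α : ι → Type*} {p : ∀ i, (∀ j, α j) → α i → M} {s : ι → Set ι}
    (hp : ∀ i, DependsOn (p i) (s i)) {ℓ : ι} (hℓ : ∀ i, ℓ ∉ s i) (x : ∀ j, α j) (a : α ℓ) :
    ∏ i, p i (Function.update x ℓ a) (Function.update x ℓ a i) =
      (∏ i ∈ univ.erase ℓ, p i x (x i)) * p ℓ x a := by
  rw [← prod_erase_mul _ _ (mem_univ ℓ), Function.update_self,
    (hp ℓ).apply_update_of_notMem (hℓ ℓ)]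
  congr 1
  refine prod_congr rfl fun i hi => ?_
  rw [Function.update_of_ne (ne_of_mem_erase hi), (hp i).apply_update_of_notMem (hℓ i)]

theorem sum_update_joint_eq_prod_erase_general {ι : Type*} [Fintype ι] [DecidableEq ι]
    (α : ι → Type*) [∀ i, Fintype (α i)]
    (pa : ι → Finset ι)
    (p : ∀ i, (∀ j, α j) → α i → ℝ)
    (hlocal : ∀ i, ∀ x y : ∀ j, α j, (∀ j ∈ pa i, x j = y j) → ∀ a : α i, p i x a = p i y a)
    (P : (∀ j, α j) → ℝ) (hP : ∀ x : ∀ j, α j, P x = ∏ i, p i x (x i))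
    (ℓ : ι) (hleaf : ∀ i, ℓ ∉ pa i)
    (hnorm : ∀ x : ∀ j, α j, ∑ a : α ℓ, p ℓ x a = 1) :
    ∀ x : ∀ j, α j,
      ∑ a : α ℓ, P (Function.update x ℓ a) = ∏ i ∈ univ.erase ℓ, p i x (x i) := by
  have hdep : ∀ i, DependsOn (p i) (pa i : Set ι) :=
    fun i _ _ hxy => funext (hlocal i _ _ hxy)
  intro x
  calc ∑ a : α ℓ, P (Function.update x ℓ a)
      = ∑ a : α ℓ, (∏ i ∈ univ.erase ℓ, p i x (x i)) * p ℓ x a := by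
        simp only [hP, prod_update_eq_prod_erase_mul hdep hleaf]
    _ = (∏ i ∈ univ.erase ℓ, p i x (x i)) * ∑ a : α ℓ, p ℓ x a := (mul_sum _ _ _).symm
    _ = ∏ i ∈ univ.erase ℓ, p i x (x i) := by rw [hnorm, mul_one]

/-- marginalizing a leaf variable: if `ℓ` is not a parent of any
variable and the table at `ℓ` is normalized, then summing the joint weight
`P x = ∏ i, p i x (x i)` over the value at `ℓ` yields the product of the remaining
factors. -/
theorem sum_update_joint_eq_prod_erase {ι : Type*} [Fintype ι] [DecidableEq ι]
    (α : ι → Type*) [∀ i, Fintype (α i)] [∀ i, Nonempty (α i)]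
    (pa : ι → Finset ι)
    (p : ∀ i, (∀ j, α j) → α i → ℝ)
    (hlocal : ∀ i, ∀ x y : ∀ j, α j, (∀ j ∈ pa i, x j = y j) → ∀ a : α i, p i x a = p i y a)
    (P : (∀ j, α j) → ℝ) (hP : ∀ x : ∀ j, α j, P x = ∏ i, p i x (x i))
    (ℓ : ι) (hleaf : ∀ i, ℓ ∉ pa i)
    (hnorm : ∀ x : ∀ j, α j, ∑ a : α ℓ, p ℓ x a = 1) :
    ∀ x : ∀ j, α j,
      ∑ a : α ℓ, P (Function.update x ℓ a) = ∏ i ∈ univ.erase ℓ, p i x (x i) :=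
  sum_update_joint_eq_prod_erase_general α pa p hlocal P hP ℓ hleaf hnorm
end

section
/- Let 𝒴 ⊆ ι be a set of indices such that pa i ∩ 𝒴 = ∅ for every i ∉ 𝒴. Then for every configuration x : Π j, α j, the sum of P over all configurations that agree with x on every coordinate outside 𝒴 equals ∏_{i ∉ 𝒴} p i x (x i); that is, marginalizing the joint weight over all variables in 𝒴 yields the product of the factors of the remaining variables. -/
/-!
Split the joint weight of a configuration `y` agreeing with `x` outside `Y` into the factors
outside `Y` and those inside. Since no variable outside `Y` has a parent in `Y`, the outer factors
equal those of `x` and come out of the sum. The inner factors sum to one: peel off the largest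
index `m` of `Y`; nothing else in `Y` depends on `y m`, so summing over `y m` consumes the
normalized table of `m`, and induction finishes.
-/

open Finset Function

section

open Classical

variable {ι : Type*} [Fintype ι] {α : ι → Type*} [∀ i, Fintype (α i)]

theorem sum_agree_outside_insert [DecidableEq ι] {β : Type*} [AddCommMonoid β] {s : Finset ι}
    {m : ι} (hm : m ∉ s) (x : ∀ j, α j) (f : (∀ j, α j) → β) :
    ∑ y ∈ univ.filter (fun y : ∀ j, α j => ∀ j ∉ insert m s, y j = x j), f y =
      ∑ y ∈ univ.filter (fun y : ∀ j, α j => ∀ j ∉ s, y j = x j), ∑ b, f (update y m b) := by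
  rw [← sum_product']
  refine sum_nbij' (fun y => (update y m (x m), y m)) (fun yb => update yb.1 m yb.2)
    ?_ ?_ ?_ ?_ fun y _ => by simp
  · simp only [mem_product, mem_filter, mem_univ, true_and, mem_insert, not_or, and_true]
    intro y hy j hjs
    by_cases hjm : j = m
    · subst hjm; simp
    · rw [update_of_ne hjm]
      exact hy j ⟨hjm, hjs⟩
  · simp only [mem_product, mem_filter, mem_univ, true_and, and_true, mem_insert, not_or,
      and_imp, Prod.forall]
    intro y b hy j hjm hjs
    rw [update_of_ne hjm]
    exact hy j hjs
  · simp
  · simp only [mem_product, mem_filter, mem_univ, and_true, true_and, Prod.forall, update_self,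
      update_idem, Prod.mk.injEq]
    intro y b hy
    rw [← hy m hm, update_eq_self]

theorem sum_agree_outside_prod_eq_one [LinearOrder ι] {R : Type*} [CommSemiring R]
    (p : ∀ i, (∀ j, α j) → α i → R)
    (hcausal : ∀ i, ∀ x y : ∀ j, α j, (∀ j < i, x j = y j) → ∀ a, p i x a = p i y a)
    (hnorm : ∀ i, ∀ x : ∀ j, α j, ∑ a, p i x a = 1) (s : Finset ι) (x : ∀ j, α j) :
    ∑ y ∈ univ.filter (fun y : ∀ j, α j => ∀ j ∉ s, y j = x j), ∏ i ∈ s, p i y (y i) = 1 := by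
  induction s using Finset.induction_on_max with
  | empty =>
    rw [show univ.filter (fun y : ∀ j, α j => ∀ j ∉ (∅ : Finset ι), y j = x j) = {x} by
      ext y; simp [funext_iff]]
    simp
  | insert m s hlt ih =>
    have hm : m ∉ s := fun h => (hlt m h).false
    have hpeel : ∀ y : ∀ j, α j, ∑ b, ∏ i ∈ insert m s, p i (update y m b) (update y m b i) =
        ∏ i ∈ s, p i y (y i) := by
      intro y
      have hlast : ∀ b, p m (update y m b) b = p m y b := fun b =>
        hcausal m _ y (fun j hj => update_of_ne hj.ne b y) b
      have hrest : ∀ b, ∀ i ∈ s, p i (update y m b) (update y m b i) = p i y (y i) := by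
        intro b i hi
        rw [update_of_ne (hlt i hi).ne]
        exact hcausal i _ y (fun j hj => update_of_ne (hj.trans (hlt i hi)).ne b y) _
      simp only [prod_insert hm, update_self, hlast, prod_congr rfl (hrest _), ← sum_mul,
        hnorm, one_mul]
    rw [sum_agree_outside_insert hm, sum_congr rfl fun y _ => hpeel y, ih]

end

open Classical in
theorem sum_agree_outside_eq_prod_sdiff_general {ι : Type*} [Fintype ι] [LinearOrder ι]
    (α : ι → Type*) [∀ i, Fintype (α i)]
    (pa : ι → Finset ι) (hpa : ∀ i : ι, ∀ j ∈ pa i, j < i)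
    (p : ∀ i, (∀ j, α j) → α i → ℝ)
    (hlocal : ∀ i, ∀ x y : ∀ j, α j, (∀ j ∈ pa i, x j = y j) → ∀ a : α i, p i x a = p i y a)
    (hnorm : ∀ i, ∀ x : ∀ j, α j, ∑ a : α i, p i x a = 1)
    (P : (∀ j, α j) → ℝ) (hP : ∀ x : ∀ j, α j, P x = ∏ i, p i x (x i))
    (Y : Finset ι) (hleaf : ∀ i ∉ Y, pa i ∩ Y = ∅) :
    ∀ x : ∀ j, α j,
      ∑ y ∈ Finset.univ.filter (fun y : ∀ j, α j => ∀ j ∉ Y, y j = x j), P y =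
        ∏ i ∈ Finset.univ \ Y, p i x (x i) := by
  intro x
  have hsplit : ∀ y ∈ univ.filter (fun y : ∀ j, α j => ∀ j ∉ Y, y j = x j),
      P y = (∏ i ∈ univ \ Y, p i x (x i)) * ∏ i ∈ Y, p i y (y i) := by
    intro y hy
    simp only [mem_filter, mem_univ, true_and] at hy
    have houter : ∀ i ∈ univ \ Y, p i y (y i) = p i x (x i) := by
      intro i hi
      have hiY : i ∉ Y := (mem_sdiff.mp hi).2
      rw [hy i hiY]
      refine hlocal i y x (fun j hj => hy j fun hjY => ?_) (x i)
      simpa [hleaf i hiY] using mem_inter.mpr ⟨hj, hjY⟩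
    rw [hP, ← prod_sdiff (subset_univ Y), prod_congr rfl houter]
  have hcausal : ∀ i, ∀ x y : ∀ j, α j, (∀ j < i, x j = y j) → ∀ a, p i x a = p i y a :=
    fun i x y h => hlocal i x y fun j hj => h j (hpa i j hj)
  rw [sum_congr rfl hsplit, ← mul_sum, sum_agree_outside_prod_eq_one p hcausal hnorm Y x, mul_one]

open Classical in
/-- marginalizing a set of leaf variables: if no variable outside `Y`
has a parent inside `Y`, then summing the joint weight `P y = ∏ i, p i y (y i)` over
all configurations agreeing with `x` outside `Y` yields the product of the factors of
the variables outside `Y`. -/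
theorem sum_agree_outside_eq_prod_sdiff {ι : Type*} [Fintype ι] [LinearOrder ι]
    (α : ι → Type*) [∀ i, Fintype (α i)] [∀ i, Nonempty (α i)]
    (pa : ι → Finset ι) (hpa : ∀ i : ι, ∀ j ∈ pa i, j < i)
    (p : ∀ i, (∀ j, α j) → α i → ℝ)
    (hlocal : ∀ i, ∀ x y : ∀ j, α j, (∀ j ∈ pa i, x j = y j) → ∀ a : α i, p i x a = p i y a)
    (hnorm : ∀ i, ∀ x : ∀ j, α j, ∑ a : α i, p i x a = 1)
    (P : (∀ j, α j) → ℝ) (hP : ∀ x : ∀ j, α j, P x = ∏ i, p i x (x i))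
    (Y : Finset ι) (hleaf : ∀ i ∉ Y, pa i ∩ Y = ∅) :
    ∀ x : ∀ j, α j,
      ∑ y ∈ Finset.univ.filter (fun y : ∀ j, α j => ∀ j ∉ Y, y j = x j), P y =
        ∏ i ∈ Finset.univ \ Y, p i x (x i) :=
  sum_agree_outside_eq_prod_sdiff_general α pa hpa p hlocal hnorm P hP Y hleaf
end

section
/- Let M be a maximal ancestral graph on a finite vertex set O and let Y ∈ O be a vertex with no directed edge out of it (Y is not a parent of any vertex; equivalently, Y is not an ancestor of any other vertex). Let M' be the induced subgraph of M on O \ {Y} (keeping all edges of M between vertices of O \ {Y}). Then for all distinct X, W ∈ O \ {Y} and every Z ⊆ O \ {X, W, Y}: Z m-separates X and W in M if and only if Z m-separates X and W in M'. -/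
/-!
A childless vertex is its own only descendant, and every edge at it has an arrowhead there. So on
a path m-connecting two other vertices it would be a collider with no descendant in a conditioning
set that avoids it, which is impossible; likewise a directed path to another vertex never passes
through it. Hence m-connecting paths, with the ancestor relations their colliders need, are the
same in `G` and in `G` with any set of childless vertices removed.
-/

namespace List

variable {α β : Type*}

theorem triple_infix_map_iff {f : α → β} {l : List α} {a b c : β} :
    [a, b, c] <:+: l.map f ↔ ∃ a' b' c', [a', b', c'] <:+: l ∧ f a' = a ∧ f b' = b ∧ f c' = c := by
  refine ⟨fun h => ?_, fun ⟨a', b', c', hl, ha, hb, hc⟩ => ha ▸ hb ▸ hc ▸ hl.map f⟩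
  obtain ⟨(_ | ⟨a', _ | ⟨b', _ | ⟨c', _ | _⟩⟩⟩), hl, heq⟩ := infix_map_iff.mp h <;>
    simp only [map_cons, map_nil, cons.injEq, reduceCtorEq, and_false] at heq
  exact ⟨a', b', c', hl, heq.1.symm, heq.2.1.symm, heq.2.2.1.symm⟩

theorem exists_triple_infix_of_mem {l : List α} {b : α} (hb : b ∈ l)
    (hhead : l.head? ≠ some b) (hlast : l.getLast? ≠ some b) : ∃ a c, [a, b, c] <:+: l := by
  obtain ⟨l₁, l₂, rfl⟩ := append_of_mem hb
  rcases l₁.eq_nil_or_concat with rfl | ⟨l₁, a, rfl⟩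
  · simp at hhead
  · rcases l₂ with _ | ⟨c, l₂⟩
    · simp at hlast
    · exact ⟨a, c, l₁, l₂, by simp⟩

end List

namespace MixedGraph

variable {V : Type*} (G : MixedGraph V)

theorem adj_of_triple_infix {p : List V} (hp : p.IsChain G.Adj) {a b c : V}
    (h : [a, b, c] <:+: p) : G.Adj a b ∧ G.Adj b c := by
  simpa [List.isChain_cons_cons] using hp.infix h

theorem colliderAt_of_forall_not_dir {a b c : V} (hb : ∀ d, ¬ G.dir b d) (hab : G.Adj a b)
    (hbc : G.Adj b c) : G.ColliderAt a b c := by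
  refine ⟨?_, ?_⟩
  · rcases hab with h | h | h
    exacts [.inl h, absurd h (hb a), .inr h]
  · rcases hbc with h | h | h
    exacts [absurd h (hb c), .inl h, .inr (G.bi_symm b c h)]

section Induce

variable {s : Set V}

theorem isPath_map_val_iff {q : List s} {x y : s} :
    G.IsPath (q.map (↑)) x y ↔ (G.induce s).IsPath q x y := by
  have hval := Option.map_injective (Subtype.val_injective (p := (· ∈ s)))
  simp only [IsPath, List.nodup_map_iff Subtype.val_injective, List.head?_map, List.getLast?_map]
  exact and_congr .rfl <| and_congr (hval.eq_iff (b := some x)) <|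
    and_congr (hval.eq_iff (b := some y)) (List.isChain_map _)

variable (hs : ∀ a b, G.dir a b → a ∈ s)
include hs

theorem mem_of_anc {a b : V} (h : G.Anc a b) (hb : b ∈ s) : a ∈ s := by
  rcases h.cases_head with rfl | ⟨c, hac, -⟩
  exacts [hb, hs a c hac]

theorem induce_anc_iff {a b : s} : (G.induce s).Anc a b ↔ G.Anc a b := by
  refine ⟨fun h => h.lift Subtype.val fun _ _ hcd => hcd, fun h => ?_⟩
  suffices ∀ d (hd : d ∈ s), G.Anc a d → (G.induce s).Anc a ⟨d, hd⟩ from this b b.2 h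
  intro d hd had
  induction had with
  | refl => exact .refl
  | @tail c d _ hcd ih =>
    exact (ih (hs c d hcd)).tail (show (G.induce s).dir ⟨c, hs c d hcd⟩ ⟨d, hd⟩ from hcd)

theorem mConnecting_map_val_iff {Z : Set V} (hZ : Z ⊆ s) {q : List s} {x y : s} :
    G.MConnecting Z (q.map (↑)) x y ↔ (G.induce s).MConnecting {v | ↑v ∈ Z} q x y := by
  have hdesc (b : s) : (∃ z ∈ Z, G.Anc b z) ↔ ∃ z ∈ {v : s | ↑v ∈ Z}, (G.induce s).Anc b z :=
    ⟨fun ⟨z, hz, h⟩ => ⟨⟨z, hZ hz⟩, hz, (G.induce_anc_iff hs).mpr h⟩,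
      fun ⟨z, hz, h⟩ => ⟨z, hz, (G.induce_anc_iff hs).mp h⟩⟩
  refine and_congr (G.isPath_map_val_iff) ⟨fun h a b c habc => ?_, fun h a b c habc => ?_⟩
  · rw [← hdesc]
    exact h a b c (by simpa using habc.map Subtype.val)
  · obtain ⟨a', b', c', habc', rfl, rfl, rfl⟩ := List.triple_infix_map_iff.mp habc
    rw [hdesc]
    exact h a' b' c' habc'

theorem mem_of_mem_mConnecting {Z : Set V} (hZ : Z ⊆ s) {p : List V} {x y : V}
    (hx : x ∈ s) (hy : y ∈ s) (hp : G.MConnecting Z p x y) {v : V} (hv : v ∈ p) : v ∈ s := by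
  by_contra hvs
  obtain ⟨⟨-, hhead, hlast, hchain⟩, htriple⟩ := hp
  obtain ⟨a, c, habc⟩ := List.exists_triple_infix_of_mem hv
    (fun h => hvs (Option.some_injective _ (hhead.symm.trans h) ▸ hx))
    (fun h => hvs (Option.some_injective _ (hlast.symm.trans h) ▸ hy))
  obtain ⟨hav, hvc⟩ := G.adj_of_triple_infix hchain habc
  obtain ⟨z, hz, hvz⟩ := (htriple a v c habc).1
    (G.colliderAt_of_forall_not_dir (fun d hvd => hvs (hs v d hvd)) hav hvc)
  exact hvs (G.mem_of_anc hs hvz (hZ hz))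

theorem induce_mSep_iff {Z : Set V} (hZ : Z ⊆ s) {x y : s} :
    (G.induce s).MSep x y {v | ↑v ∈ Z} ↔ G.MSep x y Z := by
  refine and_congr .rfl (and_congr .rfl ?_)
  simp only [← not_exists]
  refine not_congr ⟨fun ⟨q, hq⟩ => ⟨q.map (↑), (G.mConnecting_map_val_iff hs hZ).mpr hq⟩,
    fun ⟨p, hp⟩ => ?_⟩
  lift p to List s using fun v hv => G.mem_of_mem_mConnecting hs hZ x.2 y.2 hp hv
  exact ⟨p, (G.mConnecting_map_val_iff hs hZ).mp hp⟩

end Induce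

end MixedGraph

theorem msep_induce_of_leaf_general {V : Type*}
    (G : MixedGraph V) (Y : V) (hY : ∀ w : V, ¬ G.dir Y w)
    (x w : V) (hx : x ≠ Y) (hw : w ≠ Y)
    (Z : Set V) (hZ : Z ⊆ Set.univ \ {x, w, Y}) :
    G.MSep x w Z ↔
      (G.induce {v : V | v ≠ Y}).MSep ⟨x, hx⟩ ⟨w, hw⟩ {v : {v : V | v ≠ Y} | (v : V) ∈ Z} := by
  have hchildless : ∀ a b, G.dir a b → a ∈ {v : V | v ≠ Y} := fun a b hab (ha : a = Y) =>
    hY b (ha ▸ hab)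
  have hYZ : Z ⊆ {v : V | v ≠ Y} := fun z hz (hzY : z = Y) =>
    (hZ hz).2 (by simp [hzY])
  exact (G.induce_mSep_iff hchildless hYZ (x := ⟨x, hx⟩) (y := ⟨w, hw⟩)).symm

/-- removing a leaf vertex `Y` (no directed edge out of it) from a MAG
preserves m-separation among the remaining vertices, for any conditioning set avoiding
`x`, `w` and `Y`. -/
theorem msep_induce_of_leaf {V : Type*} [Fintype V]
    (G : MixedGraph V) (hG : G.IsMAG) (Y : V) (hY : ∀ w : V, ¬ G.dir Y w)
    (x w : V) (hx : x ≠ Y) (hw : w ≠ Y) (hxw : x ≠ w)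
    (Z : Set V) (hZ : Z ⊆ Set.univ \ {x, w, Y}) :
    G.MSep x w Z ↔
      (G.induce {v : V | v ≠ Y}).MSep ⟨x, hx⟩ ⟨w, hw⟩ {v : {v : V | v ≠ Y} | (v : V) ∈ Z} :=
  msep_induce_of_leaf_general G Y hY x w hx hw Z hZ
end

section
/- Let M be a maximal ancestral graph on a finite vertex set O and let T ∈ O. Then MMB(T) m-separates T from every vertex X ∈ O \ MMB⁺(T); that is, for every X ∈ O with X ∉ MMB(T) ∪ {T}, the set MMB(T) m-separates T and X. -/
namespace MMBAux

open List

lemma mid_ne_head {α : Type*} {p : List α} {a b c u : α} (hnd : p.Nodup)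
    (hinf : [a, b, c] <:+: p) (hh : p.head? = some u) : b ≠ u := by
  obtain ⟨s, t, rfl⟩ := hinf
  cases s with
  | nil =>
    simp only [nil_append, cons_append, head?_cons, Option.some.injEq] at hh
    subst hh
    have h2 : (a :: b :: c :: t).Nodup := by simpa using hnd
    rintro rfl
    simp at h2
  | cons hd tl =>
    simp only [cons_append, head?_cons, Option.some.injEq] at hh
    subst hh
    simp only [cons_append, nodup_cons] at hnd
    rintro rfl
    exact hnd.1 (by simp)

lemma mid_ne_last {α : Type*} {p : List α} {a b c u : α} (hnd : p.Nodup)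
    (hinf : [a, b, c] <:+: p) (hh : p.getLast? = some u) : b ≠ u := by
  have h1 : [c, b, a] <:+: p.reverse := by
    have := hinf.reverse
    simpa using this
  exact mid_ne_head (nodup_reverse.mpr hnd) h1 (by simpa using hh)

lemma mem_mmb_of_colliderPath {V : Type*} (G : MixedGraph V) {T x : V} {p : List V}
    (hp : G.IsPath p T x) (hxT : x ≠ T)
    (hcol : ∀ a b c, [a, b, c] <:+: p → G.ColliderAt a b c) : x ∈ G.MMB T := by
  refine ⟨hxT, ?_⟩
  rintro ⟨-, -, hall⟩
  refine hall p ⟨hp, ?_⟩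
  intro a b c hinf
  have hbT : b ≠ T := mid_ne_head hp.1 hinf hp.2.1
  have hbx : b ≠ x := mid_ne_last hp.1 hinf hp.2.2.1
  refine ⟨fun _ => ⟨b, ?_, Relation.ReflTransGen.refl⟩,
    fun hnc => absurd (hcol a b c hinf) hnc⟩
  simp [Set.mem_diff, hbT, hbx]

lemma allColliders {V : Type*} (G : MixedGraph V) (T : V) :
    ∀ n (p : List V) (x : V), p.length ≤ n → G.MConnecting (G.MMB T) p T x → x ≠ T →
      ∀ a b c, [a, b, c] <:+: p → G.ColliderAt a b c := by
  intro n
  induction n with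
  | zero =>
    intro p x hlen _ _ a b c hinf
    have := hinf.sublist.length_le
    simp at this
    omega
  | succ n ih =>
    intro p x hlen hp hxT a b c hinf
    by_contra hnc
    have hbmmb : b ∉ G.MMB T := (hp.2 a b c hinf).2 hnc
    have hbT : b ≠ T := mid_ne_head hp.1.1 hinf hp.1.2.1
    obtain ⟨s, t, hst⟩ := hinf
    subst hst
    set p : List V := s ++ [a, b, c] ++ t with hpdef
    set q : List V := s ++ [a, b] with hq
    have hpref : q <+: p := ⟨[c] ++ t, by simp [hq, hpdef]⟩
    have hqinf : ∀ u v w : V, [u, v, w] <:+: q → [u, v, w] <:+: p :=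
      fun u v w h => h.trans hpref.isInfix
    have hqhead : q.head? = p.head? := by
      cases s <;> simp [hq, hpdef]
    have hqpath : G.IsPath q T b := by
      refine ⟨hpref.sublist.nodup hp.1.1, ?_, ?_, hp.1.2.2.2.infix hpref.isInfix⟩
      · rw [hqhead]; exact hp.1.2.1
      · rw [show q = (s ++ [a]) ++ [b] by simp [hq]]
        exact List.getLast?_concat
    have hql : q.length ≤ n := by
      have h1 : p.length ≤ n + 1 := hlen
      simp only [hq, hpdef, List.length_append, List.length_cons,
        List.length_nil] at h1 ⊢
      omega
    have hqconn : G.MConnecting (G.MMB T) q T b :=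
      ⟨hqpath, fun u v w h => hp.2 u v w (hqinf u v w h)⟩
    have hcolq := ih q b hql hqconn hbT
    exact hbmmb (mem_mmb_of_colliderPath G hqpath hbT hcolq)

end MMBAux

/-- `MMB(T)` m-separates `T` from every vertex outside `MMB⁺(T)`. -/
theorem mmb_msep_outside {V : Type*} [Fintype V]
    (G : MixedGraph V) (hG : G.IsMAG) (T : V) :
    ∀ X : V, X ≠ T → X ∉ G.MMB T → G.MSep T X (G.MMB T) := by
  intro X hXT hXmmb
  refine ⟨fun h => h.1 rfl, hXmmb, ?_⟩
  intro p hp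
  exact hXmmb (MMBAux.mem_mmb_of_colliderPath G hp.1 hXT
    (MMBAux.allColliders G T p.length p X le_rfl hp hXT))
end

section
/- Let M be a maximal ancestral graph on a finite vertex set O and let T, X ∈ O be distinct. Then X ∈ MMB(T) if and only if X is adjacent to T or there is a collider path between T and X. -/
private lemma middle_ne_head {α : Type*} {p s t : List α} {a b c x : α}
    (hnd : p.Nodup) (hh : p.head? = some x) (heq : s ++ a :: b :: c :: t = p) :
    b ≠ x := by
  subst heq
  cases s with
  | nil =>
    simp only [List.nil_append, List.head?_cons, Option.some.injEq] at hh
    subst hh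
    simp only [List.nil_append, List.nodup_cons] at hnd
    intro hb
    exact hnd.1 (by simp [hb])
  | cons s0 s' =>
    simp only [List.cons_append, List.head?_cons, Option.some.injEq] at hh
    subst hh
    simp only [List.cons_append, List.nodup_cons] at hnd
    intro hb
    exact hnd.1 (by simp [hb])

private lemma middle_ne_last {α : Type*} {p s t : List α} {a b c x : α}
    (hnd : p.Nodup) (hh : p.getLast? = some x) (heq : s ++ a :: b :: c :: t = p) :
    b ≠ x := by
  have hrev : t.reverse ++ c :: b :: a :: s.reverse = p.reverse := by
    rw [← heq]; simp
  exact middle_ne_head (p := p.reverse) (List.nodup_reverse.mpr hnd)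
    (by rw [List.head?_reverse, hh]) hrev

/-- `X ∈ MMB(T)` iff `X` is adjacent to `T` or there is a collider path
between `T` and `X`. -/
theorem mem_mmb_iff_adj_or_colliderPath {V : Type*} [Fintype V]
    (G : MixedGraph V) (hG : G.IsMAG) (T X : V) (hTX : T ≠ X) :
    X ∈ G.MMB T ↔ (G.Adj T X ∨ ∃ p : List V, G.IsColliderPath p T X) := by
  classical
  have hTZ : T ∉ (Set.univ \ {T, X} : Set V) := by simp
  have hXZ : X ∉ (Set.univ \ {T, X} : Set V) := by simp
  constructor
  · rintro ⟨hne, hnsep⟩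
    have hex : ∃ p : List V, G.MConnecting (Set.univ \ {T, X}) p T X := by
      by_contra h
      push_neg at h
      exact hnsep ⟨hTZ, hXZ, h⟩
    obtain ⟨p, hpath, htrip⟩ := hex
    obtain ⟨hnd, hhead, hlast, hchain⟩ := hpath
    -- every interior vertex is a collider
    have hcol : ∀ a b c : V, [a, b, c] <:+: p → G.ColliderAt a b c := by
      intro a b c hinf
      by_contra hnc
      have hb := (htrip a b c hinf).2 hnc
      obtain ⟨s, t, heq⟩ := hinf
      simp only [List.append_assoc, List.cons_append, List.nil_append] at heq
      have h1 : b ≠ T := middle_ne_head hnd hhead heq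
      have h2 : b ≠ X := middle_ne_last hnd hlast heq
      exact hb (by simp [h1, h2])
    -- p has head T, last X, T ≠ X
    cases p with
    | nil => simp at hhead
    | cons h q =>
      simp only [List.head?_cons, Option.some.injEq] at hhead
      cases q with
      | nil => simp only [List.getLast?_singleton, Option.some.injEq] at hlast
               exact absurd (hhead ▸ hlast) hTX
      | cons h2 q2 =>
        cases q2 with
        | nil =>
          obtain rfl : h2 = X := by simpa using hlast
          left
          rw [List.Chain', List.isChain_cons_cons] at hchain
          exact hhead ▸ hchain.1
        | cons h3 q3 =>
          right
          exact ⟨h :: h2 :: h3 :: q3, ⟨hnd, by simp [hhead], hlast, hchain⟩,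
            by simp, hcol⟩
  · intro h
    have hmc : ∃ p : List V, G.MConnecting (Set.univ \ {T, X}) p T X := by
      rcases h with hadj | ⟨p, hpath, hlen, hcol⟩
      · refine ⟨[T, X], ⟨by simp [hTX], by simp, by simp, List.isChain_cons_cons.mpr ⟨hadj, List.isChain_singleton _⟩⟩, ?_⟩
        intro a b c hinf
        have := hinf.length_le
        simp at this
      · refine ⟨p, hpath, ?_⟩
        intro a b c hinf
        obtain ⟨hnd, hhead, hlast, _⟩ := hpath
        obtain ⟨s, t, heq⟩ := hinf
        simp only [List.append_assoc, List.cons_append, List.nil_append] at heq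
        have h1 : b ≠ T := middle_ne_head hnd hhead heq
        have h2 : b ≠ X := middle_ne_last hnd hlast heq
        refine ⟨fun _ => ⟨b, by simp [h1, h2], Relation.ReflTransGen.refl⟩,
          fun hnc => absurd (hcol a b c ⟨s, t, by simp [heq]⟩) hnc⟩
    refine ⟨hTX.symm, ?_⟩
    rintro ⟨_, _, hsep⟩
    obtain ⟨p, hp⟩ := hmc
    exact hsep p hp
end
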